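/- arXiv:1005.1458 — 5 statements merged into one kernel-verified Lean document; each statement's English description precedes it below -/
import Mathlib

section
/- Let m, t be coprime positive integers, let t⁻¹ denote the inverse of t modulo m and m⁻¹ the inverse of m modulo t, and let α be a positive integer. Then e(α·t⁻¹/m) = e(-α·m⁻¹/t) + O(α/(mt)), with an absolute implied constant. -/
open Complex

/-- e(t) = exp(2πi t) -/
noncomputable def e (t : ℝ) : ℂ := Complex.exp (2 * Real.pi * Complex.I * t)

/-!
Since `t·t⁻¹ + m·m⁻¹ ≡ 1` both mod `m` and mod `t`, it is `≡ 1 (mod mt)`, i.e.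
`t⁻¹/m + m⁻¹/t = 1/(mt) + k` for an integer `k`. Multiplying by `α`, the two arguments of `e`
differ by `α/(mt)` modulo an integer, and `e` is `2π`-Lipschitz and `1`-periodic.
-/

lemma e_add (x y : ℝ) : e (x + y) = e x * e y := by
  simp only [e, ofReal_add, mul_add, Complex.exp_add]

lemma e_intCast (n : ℤ) : e n = 1 := by
  rw [e, mul_comm, ofReal_intCast, Complex.exp_int_mul_two_pi_mul_I]

lemma e_add_intCast (x : ℝ) (n : ℤ) : e (x + n) = e x := by
  rw [e_add, e_intCast, mul_one]

lemma e_eq_exp_I_mul (x : ℝ) : e x = Complex.exp (I * (2 * Real.pi * x : ℝ)) := by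
  rw [e]; push_cast; ring_nf

lemma norm_e (x : ℝ) : ‖e x‖ = 1 := by
  rw [e_eq_exp_I_mul, mul_comm, Complex.norm_exp_ofReal_mul_I]

lemma norm_e_sub_one_le (x : ℝ) : ‖e x - 1‖ ≤ 2 * Real.pi * |x| := by
  rw [e_eq_exp_I_mul]
  refine Real.norm_exp_I_mul_ofReal_sub_one_le.trans_eq ?_
  rw [Real.norm_eq_abs, abs_mul, abs_of_pos Real.two_pi_pos]

lemma norm_e_sub_e_le (x y : ℝ) (n : ℤ) : ‖e x - e y‖ ≤ 2 * Real.pi * |x - y - n| := by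
  have hx : x = y + (x - y - n) + n := by ring
  conv_lhs => rw [hx, e_add_intCast, e_add, ← mul_sub_one, norm_mul, norm_e, one_mul]
  exact norm_e_sub_one_le _

lemma Int.mul_dvd_mul_add_mul_sub_one {m t a b : ℤ} (ha : t * a ≡ 1 [ZMOD m])
    (hb : m * b ≡ 1 [ZMOD t]) : m * t ∣ t * a + m * b - 1 := by
  obtain ⟨c, hc⟩ := ha.symm.dvd
  have hcop : IsCoprime m t := ⟨-c, a, by linear_combination hc⟩
  obtain ⟨d, hd⟩ := hb.symm.dvd
  exact hcop.mul_dvd ⟨b + c, by linear_combination hc⟩ ⟨a + d, by linear_combination hd⟩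

/-- If `t·tinv ≡ 1 (mod m)` and `m·minv ≡ 1 (mod t)`, then for a positive integer `α`,
`e(α·t⁻¹/m) = e(-α·m⁻¹/t) + O(α/(mt))` with an absolute implied constant. -/
theorem inverse_fractions_estimate :
    ∃ C : ℝ, ∀ m t : ℕ, ∀ tinv minv : ℤ, ∀ α : ℕ,
      0 < m → 0 < t → Nat.Coprime m t → 0 < α →
      (t * tinv) % (m : ℤ) = 1 % (m : ℤ) →
      (m * minv) % (t : ℤ) = 1 % (t : ℤ) →
      ‖e ((α * tinv : ℤ) / (m : ℝ)) - e (-(α * minv : ℤ) / (t : ℝ))‖ ≤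
        C * α / (m * t) := by
  refine ⟨2 * Real.pi, fun m t tinv minv α hm ht _ _ htinv hminv => ?_⟩
  obtain ⟨k, hk⟩ := Int.mul_dvd_mul_add_mul_sub_one htinv hminv
  have hkR : (t : ℝ) * tinv + m * minv - 1 = m * t * k := by exact_mod_cast hk
  have hdiff : (α * tinv : ℤ) / (m : ℝ) - -(α * minv : ℤ) / (t : ℝ) - ((α * k : ℤ) : ℝ) =
      α / (m * t) := by
    field_simp
    push_cast
    linear_combination (α : ℝ) * hkR
  calc _ ≤ 2 * Real.pi * |(α : ℝ) / (m * t)| := hdiff ▸ norm_e_sub_e_le _ _ (α * k)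
    _ = 2 * Real.pi * α / (m * t) := by rw [abs_of_nonneg (by positivity), mul_div_assoc]
end

section
/- For any z in the upper half plane and any Y > 0, the number of cosets γ ∈ Γ_∞\Γ with Im(γ·z) ≥ 1/Y is O(1 + Y), with an absolute implied constant. -/
/-!
For `γ` with bottom row `(c, d)` we have `Im (γ • z) = Im z / |c z + d|²`, and the coset `Γ_∞ γ` is
determined by `(c, d)`. Replacing `z` by a translate `w = g • z` in the fundamental domain (and `γ`
by `γ g⁻¹`), the cosets in question therefore inject into the coprime pairs `(c, d)` with
`|c w + d|² ≤ Y Im w`, where now `Im w ≥ 1/2`. A pair with `c ≠ 0` has `|c| ≤ √(Y / Im w)`, and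
each such `c` leaves at most `2 √(Y Im w) + 1` values of `d`, while `c = 0` leaves only `d = ±1`:
in total at most `3 + 6 Y` pairs.
-/

open scoped UpperHalfPlane

/-- The stabilizer of ∞ in PSL₂(ℤ), modelled in SL₂(ℤ) as the subgroup generated by
`T : z ↦ z + 1` and `-1`. -/
def GammaInf : Subgroup (Matrix.SpecialLinearGroup (Fin 2) ℤ) :=
  Subgroup.closure {ModularGroup.T, -1}

open Finset Matrix ModularGroup MatrixGroups

lemma eq_T_zpow_of_c_eq_zero_of_d_eq_one {g : SL(2, ℤ)} (hc : g 1 0 = 0) (hd : g 1 1 = 1) :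
    g = T ^ g 0 1 := by
  have hdet := g.det_coe
  rw [det_fin_two, hc, hd] at hdet
  have ha : g 0 0 = 1 := by linarith
  ext i j
  fin_cases i <;> fin_cases j <;> simp [coe_T_zpow, ha, hc, hd]

lemma mem_GammaInf_of_c_eq_zero {g : SL(2, ℤ)} (hc : g 1 0 = 0) : g ∈ GammaInf := by
  have hT : T ∈ GammaInf := Subgroup.subset_closure (Set.mem_insert _ _)
  have hneg : (-1 : SL(2, ℤ)) ∈ GammaInf := Subgroup.subset_closure (Set.mem_insert_of_mem _ rfl)
  have hdet := g.det_coe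
  rw [det_fin_two, hc, mul_zero, sub_zero] at hdet
  rcases Int.eq_one_or_neg_one_of_mul_eq_one' hdet with ⟨-, hd⟩ | ⟨-, hd⟩
  · rw [eq_T_zpow_of_c_eq_zero_of_d_eq_one hc hd]
    exact zpow_mem hT _
  · have h : -g = T ^ (-g) 0 1 :=
      eq_T_zpow_of_c_eq_zero_of_d_eq_one (by simp [hc]) (by simp [hd])
    rw [← neg_neg g, ← neg_one_mul, h]
    exact mul_mem hneg (zpow_mem hT _)

lemma mul_inv_mem_GammaInf_of_bottomRow_eq {a b : SL(2, ℤ)} (hc : a 1 0 = b 1 0)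
    (hd : a 1 1 = b 1 1) : b * a⁻¹ ∈ GammaInf := by
  apply mem_GammaInf_of_c_eq_zero
  rw [Matrix.SpecialLinearGroup.coe_mul, Matrix.SpecialLinearGroup.coe_inv, adjugate_fin_two]
  simp [mul_apply, Fin.sum_univ_two, hc, hd]
  ring

lemma mem_Icc_ceil_floor {a b : ℝ} {n : ℤ} : n ∈ Icc ⌈a⌉ ⌊b⌋ ↔ a ≤ n ∧ (n : ℝ) ≤ b := by
  simp [Int.ceil_le, Int.le_floor]

lemma card_Icc_ceil_floor_le {a b : ℝ} (hab : a ≤ b) : (#(Icc ⌈a⌉ ⌊b⌋) : ℝ) ≤ b - a + 1 := by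
  rw [Int.card_Icc]
  rcases le_total (⌊b⌋ + 1 - ⌈a⌉) 0 with h | h
  · rw [Int.toNat_of_nonpos h]
    push_cast
    linarith
  · have hcast : ((⌊b⌋ + 1 - ⌈a⌉).toNat : ℝ) = ((⌊b⌋ + 1 - ⌈a⌉ : ℤ) : ℝ) := by
      exact_mod_cast Int.toNat_of_nonneg h
    rw [hcast]
    push_cast
    linarith [Int.floor_le b, Int.le_ceil a]

lemma card_Icc_ceil_floor_erase_zero_le {t : ℝ} (ht : 0 ≤ t) :
    (#((Icc ⌈-t⌉ ⌊t⌋).erase 0) : ℝ) ≤ 2 * t := by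
  have h0 : (0 : ℤ) ∈ Icc ⌈-t⌉ ⌊t⌋ := mem_Icc_ceil_floor.mpr (by push_cast; constructor <;> linarith)
  have hcard : (#((Icc ⌈-t⌉ ⌊t⌋).erase 0) : ℝ) + 1 = #(Icc ⌈-t⌉ ⌊t⌋) := by
    exact_mod_cast card_erase_add_one h0
  linarith [card_Icc_ceil_floor_le (show -t ≤ t by linarith)]

/-- The coprime `(c, d)` with `|c z + d|² ≤ R`, where `z = x + i y`. -/
def coprimePairsWithin (x y R : ℝ) : Set (ℤ × ℤ) :=
  {p | IsCoprime p.1 p.2 ∧ (p.1 * x + p.2) ^ 2 + (p.1 * y) ^ 2 ≤ R}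

lemma exists_finset_coprimePairsWithin_subset (x : ℝ) {y : ℝ} (hy : 0 < y) (R : ℝ) :
    ∃ F : Finset (ℤ × ℤ), coprimePairsWithin x y R ⊆ F ∧
      (#F : ℝ) ≤ 2 + 2 * (√R / y) * (2 * √R + 1) := by
  classical
  set s := √R
  set t := s / y
  have ht : 0 ≤ t := by positivity
  let rows : Finset ℤ := (Icc ⌈-t⌉ ⌊t⌋).erase 0
  let fiber (c : ℤ) : Finset (ℤ × ℤ) := {c} ×ˢ Icc ⌈-c * x - s⌉ ⌊-c * x + s⌋
  refine ⟨{(0, 1), (0, -1)} ∪ rows.biUnion fiber, ?subset, ?card⟩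
  case subset =>
    rintro ⟨c, d⟩ ⟨hcop, hle⟩
    by_cases hc : c = 0
    · subst hc
      rcases Int.isUnit_iff.mp (isCoprime_zero_left.mp hcop) with rfl | rfl <;> simp
    have hcy : |c * y| ≤ s := Real.abs_le_sqrt (by nlinarith)
    have hcx : |c * x + d| ≤ s := Real.abs_le_sqrt (by nlinarith)
    rw [abs_mul, abs_of_pos hy, ← le_div_iff₀ hy, abs_le] at hcy
    rw [abs_le] at hcx
    simp only [coe_union, coe_biUnion, Set.mem_union, Set.mem_iUnion, mem_coe, exists_prop]
    refine Or.inr ⟨c, mem_erase.mpr ⟨hc, mem_Icc_ceil_floor.mpr hcy⟩, ?_⟩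
    simp only [fiber, mem_product, mem_singleton, true_and, mem_Icc_ceil_floor]
    constructor <;> linarith
  case card =>
    have hrows : (#rows : ℝ) ≤ 2 * t := card_Icc_ceil_floor_erase_zero_le ht
    have hfiber : ∀ c, (#(fiber c) : ℝ) ≤ 2 * s + 1 := by
      intro c
      rw [card_product, card_singleton, one_mul]
      have hs : 0 ≤ s := Real.sqrt_nonneg R
      linarith [card_Icc_ceil_floor_le (show -c * x - s ≤ -c * x + s by linarith)]
    calc (#({(0, 1), (0, -1)} ∪ rows.biUnion fiber) : ℝ)
        ≤ #({(0, 1), (0, -1)} : Finset (ℤ × ℤ)) + #(rows.biUnion fiber) := by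
          exact_mod_cast card_union_le _ _
      _ ≤ 2 + ∑ c ∈ rows, (#(fiber c) : ℝ) := by
          gcongr
          · exact_mod_cast card_le_two
          · exact_mod_cast card_biUnion_le
      _ ≤ 2 + ∑ c ∈ rows, (2 * s + 1) := by gcongr with c; exact hfiber c
      _ ≤ 2 + 2 * t * (2 * s + 1) := by
          rw [sum_const, nsmul_eq_mul]
          gcongr

lemma coprimePairsWithin_finite_and_ncard_le (x : ℝ) {y Y : ℝ} (hy : 1 / 2 ≤ y) (hY : 0 ≤ Y) :
    (coprimePairsWithin x y (Y * y)).Finite ∧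
      ((coprimePairsWithin x y (Y * y)).ncard : ℝ) ≤ 3 + 6 * Y := by
  have hy0 : 0 < y := by linarith
  obtain ⟨F, hsub, hF⟩ := exists_finset_coprimePairsWithin_subset x hy0 (Y * y)
  refine ⟨F.finite_toSet.subset hsub, ?_⟩
  have hncard : ((coprimePairsWithin x y (Y * y)).ncard : ℝ) ≤ #F := by
    exact_mod_cast (Set.ncard_le_ncard hsub F.finite_toSet).trans (Set.ncard_coe_finset F).le
  set t := √(Y * y) / y
  have hts : t * √(Y * y) = Y := by
    rw [div_mul_eq_mul_div, Real.mul_self_sqrt (by positivity), mul_div_cancel_right₀ _ hy0.ne']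
  have ht2 : t ^ 2 ≤ 2 * Y := by
    rw [div_pow, Real.sq_sqrt (by positivity), sq, ← div_div, mul_div_cancel_right₀ _ hy0.ne',
      div_le_iff₀ hy0]
    nlinarith
  have ht : 2 * t ≤ 1 + 2 * Y := by nlinarith [sq_nonneg (2 * t - 1 - 2 * Y), sq_nonneg (2 * Y - 1)]
  nlinarith

lemma bottomRow_mem_coprimePairsWithin {γ : SL(2, ℤ)} {w : ℍ} {Y : ℝ} (hY : 0 < Y)
    (h : 1 / Y ≤ (γ • w).im) : (γ 1 0, γ 1 1) ∈ coprimePairsWithin w.re w.im (Y * w.im) := by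
  refine ⟨bottom_row_coprime γ, ?_⟩
  have hnormSq : Complex.normSq (UpperHalfPlane.denom γ w) =
      (γ 1 0 * w.re + γ 1 1) ^ 2 + (γ 1 0 * w.im) ^ 2 := by
    simp [denom_apply, Complex.normSq_apply]
    ring
  rw [im_smul_eq_div_normSq, div_le_div_iff₀ hY (UpperHalfPlane.normSq_denom_pos _ w.im_ne_zero),
    hnormSq] at h
  dsimp only
  linarith

/-- For any `z ∈ ℍ` and `Y > 0`, the number of cosets `γ ∈ Γ_∞\Γ` with
`Im(γ·z) ≥ 1/Y` is `O(1 + Y)`, with an absolute implied constant. -/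
theorem card_cosets_im_ge :
    ∃ C : ℝ, ∀ z : ℍ, ∀ Y : ℝ, 0 < Y →
      {q : Quotient (QuotientGroup.rightRel GammaInf) |
        1/Y ≤ UpperHalfPlane.im ((Quotient.out q) • z)}.Finite ∧
      (Nat.card {q : Quotient (QuotientGroup.rightRel GammaInf) //
        1/Y ≤ UpperHalfPlane.im ((Quotient.out q) • z)} : ℝ) ≤ C * (1 + Y) := by
  refine ⟨6, fun z Y hY => ?_⟩
  obtain ⟨g, hg⟩ := exists_smul_mem_fd z
  set w := g • z
  have hw : 1 / 2 ≤ w.im := by nlinarith [three_le_four_mul_im_sq_of_mem_fd hg, w.im_pos]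
  obtain ⟨hfin, hcard⟩ := coprimePairsWithin_finite_and_ncard_le w.re hw hY.le
  let row (q : Quotient (QuotientGroup.rightRel GammaInf)) : ℤ × ℤ :=
    ((q.out * g⁻¹) 1 0, (q.out * g⁻¹) 1 1)
  have hmaps : Set.MapsTo row {q | 1 / Y ≤ (q.out • z).im}
      (coprimePairsWithin w.re w.im (Y * w.im)) := fun q hq =>
    bottomRow_mem_coprimePairsWithin hY (by rwa [mul_smul, inv_smul_smul])
  have hinj : Function.Injective row := fun q q' h => by
    obtain ⟨hc, hd⟩ := Prod.ext_iff.mp h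
    have hmem := mul_inv_mem_GammaInf_of_bottomRow_eq (a := q.out * g⁻¹) (b := q'.out * g⁻¹) hc hd
    rw [_root_.mul_inv_rev, inv_inv, mul_assoc, inv_mul_cancel_left] at hmem
    exact Quotient.out_equiv_out.mp (QuotientGroup.rightRel_apply.mpr hmem)
  refine ⟨hfin.of_injOn hmaps hinj.injOn, ?_⟩
  calc (Nat.card {q : Quotient (QuotientGroup.rightRel GammaInf) // 1 / Y ≤ (q.out • z).im} : ℝ)
      ≤ (coprimePairsWithin w.re w.im (Y * w.im)).ncard := by
        exact_mod_cast Set.ncard_le_ncard_of_injOn row hmaps hinj.injOn hfin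
    _ ≤ 6 * (1 + Y) := by linarith
end

section
/- Let d > 0 be squarefree with d ≡ 2 mod 4 and let O = ℤ[√(-d)] be the ring of integers of ℚ(√(-d)). An ideal a of O is primitive (has no rational integer divisor > 1) if and only if the set {1, 2, ..., N(a)} forms a complete set of residues for O/a, where N(a) is the norm of a. -/
/-!
Since `im (√-d · z) = re z`, an integer `n` divides the ideal `a` exactly when it divides the
imaginary part of every element of `a`. Hence `a` is primitive iff these imaginary parts generate
`ℤ`, i.e. iff `a` contains some `x + √-d`, i.e. iff `√-d`, and with it every element of `O`, is
congruent modulo `a` to a rational integer. The ring `O/a` is finite, as `a` contains the nonzero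
integer `N(z) = z z̄` for any nonzero `z ∈ a`, and `N(a) = 0` in `O/a`; so every integer is
congruent to one of `1, …, N(a)`, and `N(a)` residues covering `O/a` form a complete system.
-/

open scoped Zsqrtd

/-- An ideal of `ℤ√d` is primitive if no rational integer `n > 1` divides it,
i.e. the ideal is not contained in `(n)` for any `n > 1`. -/
def IsPrimitiveIdeal {d : ℤ} (a : Ideal (ℤ√d)) : Prop :=
  ∀ n : ℕ, 1 < n → ¬ a ≤ Ideal.span {(n : ℤ√d)}

/-- The norm of an ideal `a`, i.e. the cardinality of `O/a`. -/
noncomputable def idealNorm {d : ℤ} (a : Ideal (ℤ√d)) : ℕ :=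
  Nat.card ((ℤ√d) ⧸ a)

theorem Int.ideal_eq_top_iff_forall_not_le_span_natCast {I : Ideal ℤ} :
    I = ⊤ ↔ ∀ n : ℕ, 1 < n → ¬ I ≤ Ideal.span {(n : ℤ)} := by
  constructor
  · rintro rfl n hn hle
    rw [top_le_iff, Ideal.span_singleton_eq_top, Int.ofNat_isUnit, Nat.isUnit_iff] at hle
    omega
  · intro h
    by_contra hI
    obtain ⟨g, rfl⟩ : ∃ g : ℤ, I = Ideal.span {g} :=
      ⟨_, (Submodule.IsPrincipal.span_singleton_generator I).symm⟩
    have hg : g.natAbs ≠ 1 := fun hg ↦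
      hI (Ideal.span_singleton_eq_top.mpr (Int.isUnit_iff_natAbs_eq.mpr hg))
    obtain ⟨p, hp, hpg⟩ := Nat.exists_prime_and_dvd hg
    exact h p hp.one_lt (Ideal.span_singleton_le_span_singleton.mpr (Int.natCast_dvd.mpr hpg))

theorem exists_mem_Icc_natCast_eq_intCast {R : Type*} [Ring R] {N : ℕ} (hN : 0 < N)
    (hNR : (N : R) = 0) (t : ℤ) : ∃ i ∈ Finset.Icc 1 N, (i : R) = t := by
  have hr₀ := Int.emod_nonneg (t - 1) (Int.natCast_ne_zero.mpr hN.ne')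
  have hrN := Int.emod_lt_of_pos (t - 1) (Int.natCast_pos.mpr hN)
  refine ⟨((t - 1) % N).toNat + 1, by rw [Finset.mem_Icc]; omega, ?_⟩
  have hcast : ((((t - 1) % N).toNat + 1 : ℕ) : ℤ) = t - N * ((t - 1) / N) := by
    rw [Nat.cast_add, Int.toNat_of_nonneg hr₀, Int.emod_def]; ring
  rw [← Int.cast_natCast, hcast, Int.cast_sub, Int.cast_mul, Int.cast_natCast, hNR, zero_mul,
    sub_zero]

theorem bijective_natCast_Icc_iff_surjective_intCast {R : Type*} [Ring R] [Finite R] :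
    Function.Bijective (fun i : Finset.Icc 1 (Nat.card R) ↦ ((i : ℕ) : R)) ↔
      Function.Surjective (Int.cast : ℤ → R) := by
  refine ⟨fun h r ↦ ?_, fun h ↦ ?_⟩
  · obtain ⟨i, hi⟩ := h.2 r
    exact ⟨i, by rw [Int.cast_natCast]; exact hi⟩
  · have : Fintype R := Fintype.ofFinite R
    have hNR : (Nat.card R : R) = 0 := by
      rw [Nat.card_eq_fintype_card]; exact Nat.cast_card_eq_zero R
    refine (Nat.bijective_iff_surjective_and_card _).mpr ⟨fun r ↦ ?_, ?_⟩
    · obtain ⟨t, rfl⟩ := h r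
      obtain ⟨i, hi, hit⟩ := exists_mem_Icc_natCast_eq_intCast Nat.card_pos hNR t
      exact ⟨⟨i, hi⟩, hit⟩
    · rw [Nat.card_eq_finsetCard, Nat.card_Icc, Nat.add_sub_cancel]

theorem Ideal.finite_quotient_of_intCast_mem {R : Type*} [CommRing R] [Module.Finite ℤ R]
    {a : Ideal R} {m : ℤ} (hm : m ≠ 0) (hma : (m : R) ∈ a) : Finite (R ⧸ a) := by
  have : Module.Finite ℤ (R ⧸ a) :=
    Module.Finite.of_surjective (Ideal.Quotient.mkₐ ℤ a).toLinearMap Ideal.Quotient.mk_surjective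
  refine Module.finite_of_fg_torsion _ fun x ↦ ⟨⟨m, mem_nonZeroDivisors_of_ne_zero hm⟩, ?_⟩
  obtain ⟨y, rfl⟩ := Ideal.Quotient.mk_surjective x
  rw [Submonoid.mk_smul, zsmul_eq_mul, ← map_intCast (Ideal.Quotient.mk a), ← map_mul,
    Ideal.Quotient.eq_zero_iff_mem]
  exact a.mul_mem_right y hma

namespace Zsqrtd

variable {d : ℤ}

instance instModuleFiniteInt : Module.Finite ℤ (ℤ√d) := by
  refine ⟨⟨{1, sqrtd}, eq_top_iff.mpr fun z _ ↦ ?_⟩⟩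
  rw [Finset.coe_insert, Finset.coe_singleton, Submodule.mem_span_pair]
  exact ⟨z.re, z.im, by ext <;> simp⟩

theorem finite_quotient (hd : ∀ n : ℤ, d ≠ n * n) {a : Ideal (ℤ√d)} (ha : a ≠ ⊥) :
    Finite (ℤ√d ⧸ a) := by
  obtain ⟨z, hz, hz0⟩ := (Submodule.ne_bot_iff a).mp ha
  refine Ideal.finite_quotient_of_intCast_mem (m := z.norm) ((norm_eq_zero hd z).not.mpr hz0) ?_
  rw [norm_eq_mul_conj]
  exact a.mul_mem_right _ hz

def imLinearMap : ℤ√d →ₗ[ℤ] ℤ where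
  toFun := im
  map_add' := im_add
  map_smul' n z := by simp

def imIdeal (a : Ideal (ℤ√d)) : Ideal ℤ :=
  (a.restrictScalars ℤ).map imLinearMap

theorem mem_imIdeal {a : Ideal (ℤ√d)} {y : ℤ} : y ∈ imIdeal a ↔ ∃ x : ℤ, ⟨x, y⟩ ∈ a :=
  ⟨fun ⟨z, hz, hzy⟩ ↦ ⟨z.re, by rw [← hzy]; exact hz⟩, fun ⟨x, hx⟩ ↦ ⟨⟨x, y⟩, hx, rfl⟩⟩

theorem le_span_intCast_iff_imIdeal_le {a : Ideal (ℤ√d)} {n : ℤ} :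
    a ≤ Ideal.span {(n : ℤ√d)} ↔ imIdeal a ≤ Ideal.span {n} := by
  simp only [SetLike.le_def, Ideal.mem_span_singleton, intCast_dvd]
  refine ⟨fun h y hy ↦ ?_, fun h z hz ↦ ⟨?_, h (mem_imIdeal.mpr ⟨z.re, hz⟩)⟩⟩
  · obtain ⟨x, hx⟩ := mem_imIdeal.mp hy
    exact (h hx).2
  · -- `im (√d * z) = re z`
    simpa using h (mem_imIdeal.mpr ⟨_, a.mul_mem_left sqrtd hz⟩)

theorem isPrimitiveIdeal_iff_exists_mem {a : Ideal (ℤ√d)} :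
    IsPrimitiveIdeal a ↔ ∃ x : ℤ, ⟨x, 1⟩ ∈ a := by
  simp only [IsPrimitiveIdeal, ← Int.cast_natCast (R := ℤ√d), le_span_intCast_iff_imIdeal_le,
    ← Int.ideal_eq_top_iff_forall_not_le_span_natCast, Ideal.eq_top_iff_one, mem_imIdeal]

theorem surjective_intCast_quotient_iff {a : Ideal (ℤ√d)} :
    Function.Surjective (Int.cast : ℤ → ℤ√d ⧸ a) ↔ ∃ x : ℤ, ⟨x, 1⟩ ∈ a := by
  refine ⟨fun h ↦ ?_, fun ⟨x, hx⟩ q ↦ ?_⟩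
  · obtain ⟨t, ht⟩ := h (Ideal.Quotient.mk a sqrtd)
    rw [← map_intCast (Ideal.Quotient.mk a), Ideal.Quotient.eq] at ht
    refine ⟨-t, ?_⟩
    convert a.neg_mem ht using 1
    ext <;> simp
  · obtain ⟨z, rfl⟩ := Ideal.Quotient.mk_surjective q
    refine ⟨z.re - z.im * x, ?_⟩
    rw [← map_intCast (Ideal.Quotient.mk a), Ideal.Quotient.eq]
    convert a.neg_mem (a.mul_mem_left (z.im : ℤ√d) hx) using 1
    ext <;> simp

end Zsqrtd

theorem primitive_iff_complete_residues_general (d : ℕ) (hd : Squarefree d)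
    (a : Ideal (ℤ√(-(d:ℤ)))) (ha : a ≠ ⊥) :
    IsPrimitiveIdeal a ↔
      Function.Bijective (fun i : Finset.Icc 1 (idealNorm a) =>
        Ideal.Quotient.mk a ((i : ℕ) : ℤ√(-(d:ℤ)))) := by
  have hd₀ : (0 : ℤ) < d := Int.natCast_pos.mpr (Nat.pos_of_ne_zero hd.ne_zero)
  have := Zsqrtd.finite_quotient (fun n hn ↦ by nlinarith [mul_self_nonneg n]) ha
  rw [Zsqrtd.isPrimitiveIdeal_iff_exists_mem, ← Zsqrtd.surjective_intCast_quotient_iff,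
    ← bijective_natCast_Icc_iff_surjective_intCast]
  simp only [map_natCast, idealNorm]

/-- For squarefree `d ≡ 2 (mod 4)`, a nonzero ideal `a` of `ℤ[√(-d)]` is primitive if
and only if `{1, ..., N(a)}` is a complete set of residues for `O/a`. -/
theorem primitive_iff_complete_residues (d : ℕ) (hd : Squarefree d) (hd4 : d % 4 = 2)
    (a : Ideal (ℤ√(-(d:ℤ)))) (ha : a ≠ ⊥) :
    IsPrimitiveIdeal a ↔
      Function.Bijective (fun i : Finset.Icc 1 (idealNorm a) =>
        Ideal.Quotient.mk a ((i : ℕ) : ℤ√(-(d:ℤ)))) :=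
  primitive_iff_complete_residues_general d hd a ha
end

section
/- Let d ≡ 2 mod 4 be squarefree and O = ℤ[√(-d)]. Then the sum over squarefree d ≤ D (with d ≡ 2 mod 4) of the number of primitive principal ideals a ≠ (1) of O with N(a) ≤ Y·√d is O(Y³), uniformly in D. -/
open scoped Zsqrtd

namespace CPPaux
variable {e : ℤ}
def zEquiv : (ℤ√e) ≃+ (Fin 2 → ℤ) where
  toFun x := ![x.re, x.im]
  invFun f := ⟨f 0, f 1⟩
  left_inv x := by simp
  right_inv f := by funext i; fin_cases i <;> simp
  map_add' x y := by funext i; fin_cases i <;> simp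
noncomputable def zBasis : Module.Basis (Fin 2) ℤ (ℤ√e) :=
  Module.Basis.ofEquivFun (zEquiv (e := e)).toIntLinearEquiv
instance : Module.Free ℤ (ℤ√e) := Module.Free.of_basis (zBasis (e := e))
instance : Module.Finite ℤ (ℤ√e) := Module.Finite.of_basis (zBasis (e := e))

theorem repr_apply (x : ℤ√e) : ((zBasis (e := e)).repr x) 0 = x.re ∧ ((zBasis (e := e)).repr x) 1 = x.im := by
  constructor <;> · rw [zBasis, Module.Basis.ofEquivFun_repr_apply]; rfl

theorem hb0 : (zBasis (e := e)) 0 = 1 := by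
  apply (zBasis (e := e)).repr.injective
  ext i
  fin_cases i <;> simp [zBasis, Module.Basis.ofEquivFun_repr_apply] <;> rfl

theorem hb1 : (zBasis (e := e)) 1 = Zsqrtd.sqrtd := by
  apply (zBasis (e := e)).repr.injective
  ext i
  fin_cases i <;> simp [zBasis, Module.Basis.ofEquivFun_repr_apply] <;> rfl

theorem isDomain_of_neg (he : e < 0) : IsDomain (ℤ√e) := by
  have : NoZeroDivisors (ℤ√e) := ⟨by
    intro x y h
    have h2 : x.norm * y.norm = 0 := by rw [← Zsqrtd.norm_mul, h, Zsqrtd.norm_zero]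
    rcases mul_eq_zero.mp h2 with h3 | h3
    · exact Or.inl ((Zsqrtd.norm_eq_zero_iff he x).mp h3)
    · exact Or.inr ((Zsqrtd.norm_eq_zero_iff he y).mp h3)⟩
  exact NoZeroDivisors.to_isDomain _

theorem algebraNorm_eq (x : ℤ√e) : Algebra.norm ℤ x = x.norm := by
  classical
  rw [Algebra.norm_eq_matrix_det (zBasis (e := e)) x, Matrix.det_fin_two]
  have h : ∀ (i j : Fin 2), Algebra.leftMulMatrix (zBasis (e := e)) x i j
      = (zBasis (e := e)).repr (x * (zBasis (e := e)) j) i :=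
    fun i j => Algebra.leftMulMatrix_eq_repr_mul _ _ _ _
  rw [h 0 0, h 0 1, h 1 0, h 1 1, hb0, hb1]
  rw [mul_one]
  rw [(repr_apply _).1, (repr_apply _).2, (repr_apply _).1, (repr_apply _).2]
  simp [Zsqrtd.norm_def, Zsqrtd.re_mul, Zsqrtd.im_mul]


open Ideal Submodule

variable {S : Type*} [CommRing S] [IsDomain S] [Module.Free ℤ S] [Module.Finite ℤ S]

theorem natAbs_det_eq_card (I : Ideal S) {E : Type*} [EquivLike E S I] [AddEquivClass E S I]
    (e : E) :
    Int.natAbs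
        (LinearMap.det
          ((Submodule.subtype I).restrictScalars ℤ ∘ₗ AddMonoidHom.toIntLinearMap (e : S →+ I))) =
      Nat.card (S ⧸ I) := by
  by_cases hI : I = ⊥
  · subst hI
    have : (1 : S) ≠ 0 := one_ne_zero
    have : (1 : S) = 0 := EquivLike.injective e (Subsingleton.elim _ _)
    contradiction
  let ι := Module.Free.ChooseBasisIndex ℤ S
  let b := Module.Free.chooseBasis ℤ S
  cases isEmpty_or_nonempty ι
  · nontriviality S
    exact (not_nontrivial_iff_subsingleton.mpr
      (Function.Surjective.subsingleton b.repr.toEquiv.symm.surjective) (by infer_instance)).elim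
  haveI := Ideal.finiteQuotientOfFreeOfNeBot I hI
  letI := Classical.decEq ι
  let a := I.smithCoeffs b hI
  let b' := I.ringBasis b hI
  let ab := I.selfBasis b hI
  have ab_eq := I.selfBasis_def b hI
  let e' : S ≃ₗ[ℤ] I := b'.equiv ab (Equiv.refl _)
  let f : S →ₗ[ℤ] S := (I.subtype.restrictScalars ℤ).comp (e' : S →ₗ[ℤ] I)
  let f_apply : ∀ x, f x = b'.equiv ab (Equiv.refl _) x := fun x => rfl
  suffices (LinearMap.det f).natAbs = Nat.card (S ⧸ I) by
    calc
      _ = (LinearMap.det ((Submodule.subtype I).restrictScalars ℤ ∘ₗ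
            (AddEquiv.toIntLinearEquiv e : S ≃ₗ[ℤ] I))).natAbs := rfl
      _ = (LinearMap.det ((Submodule.subtype I).restrictScalars ℤ ∘ₗ _)).natAbs :=
            Int.natAbs_eq_iff_associated.mpr (LinearMap.associated_det_comp_equiv _ _ _)
      _ = Nat.card (S ⧸ I) := this
  have ha : ∀ i, f (b' i) = a i • b' i := by
    intro i; rw [f_apply, b'.equiv_apply, Equiv.refl_apply, ab_eq]
  letI := Classical.decEq ι
  calc
    Int.natAbs (LinearMap.det f) = Int.natAbs (LinearMap.toMatrix b' b' f).det := by
      rw [LinearMap.det_toMatrix]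
    _ = Int.natAbs (Matrix.diagonal a).det := ?_
    _ = Int.natAbs (∏ i, a i) := by rw [Matrix.det_diagonal]
    _ = ∏ i, Int.natAbs (a i) := map_prod Int.natAbsHom a Finset.univ
    _ = Nat.card (S ⧸ I) := ?_
  · congr 2; ext i j
    rw [LinearMap.toMatrix_apply, ha, LinearEquiv.map_smul, Module.Basis.repr_self, Finsupp.smul_single,
      smul_eq_mul, mul_one]
    by_cases h : i = j
    · rw [h, Matrix.diagonal_apply_eq, Finsupp.single_eq_same]
    · rw [Matrix.diagonal_apply_ne _ h, Finsupp.single_eq_of_ne h]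
  haveI : ∀ i, NeZero (a i).natAbs := fun i =>
    ⟨Int.natAbs_ne_zero.mpr (Ideal.smithCoeffs_ne_zero b I hI i)⟩
  simp_rw [Nat.card_congr (Ideal.quotientEquivPiZMod I b hI).toEquiv, Nat.card_pi,
    Nat.card_zmod]
  rfl

theorem card_quot_span_singleton (r : S) (hr : r ≠ 0) :
    Nat.card (S ⧸ Ideal.span ({r} : Set S)) = (Algebra.norm ℤ r).natAbs := by
  rw [Algebra.norm_apply]
  haveI := Ideal.finiteQuotientOfFreeOfNeBot (span {r}) (mt Ideal.span_singleton_eq_bot.mp hr)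
  let b := Module.Free.chooseBasis ℤ S
  rw [← natAbs_det_eq_card _ (b.equiv (basisSpanSingleton b hr) (Equiv.refl _))]
  congr
  refine b.ext fun i => ?_
  simp

theorem per_d (d : ℕ) (hd1 : 1 ≤ d) (Y : ℝ) (hY : 0 < Y)
    [IsDomain (ℤ√(-(d:ℤ)))]
    [Module.Free ℤ (ℤ√(-(d:ℤ)))] [Module.Finite ℤ (ℤ√(-(d:ℤ)))]
    (halg : ∀ x : ℤ√(-(d:ℤ)), Algebra.norm ℤ x = x.norm)
    (hcq : ∀ x : ℤ√(-(d:ℤ)), x ≠ 0 →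
      Nat.card ((ℤ√(-(d:ℤ))) ⧸ Ideal.span ({x} : Set (ℤ√(-(d:ℤ))))) = (Algebra.norm ℤ x).natAbs) :
    (Nat.card {a : Ideal (ℤ√(-(d:ℤ))) //
        a ≠ ⊤ ∧ a.IsPrincipal ∧ IsPrimitiveIdeal a ∧
        (idealNorm a : ℝ) ≤ Y * Real.sqrt d} : ℝ) ≤
      if (d:ℝ) ≤ Y^2 then 10*Y else 0 := by
  have hd0 : (0:ℝ) < d := by exact_mod_cast hd1
  have hsd0 : 0 < Real.sqrt d := Real.sqrt_pos.mpr hd0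
  have hsd1 : 1 ≤ Real.sqrt d := by
    rw [show (1:ℝ) = Real.sqrt 1 by simp]
    exact Real.sqrt_le_sqrt (by exact_mod_cast hd1)
  set T := {a : Ideal (ℤ√(-(d:ℤ))) //
        a ≠ ⊤ ∧ a.IsPrincipal ∧ IsPrimitiveIdeal a ∧
        (idealNorm a : ℝ) ≤ Y * Real.sqrt d} with hT_def
  let gen : T → ℤ√(-(d:ℤ)) := fun a => @Submodule.IsPrincipal.generator _ _ _ _ _ a.1 a.2.2.1
  have hgen_span : ∀ a : T, Ideal.span {gen a} = a.1 := fun a =>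
    @Ideal.span_singleton_generator _ _ a.1 a.2.2.1
  have key : ∀ a : T, (gen a).im ≠ 0 ∧
      ((gen a).re:ℝ)^2 + (d:ℝ) * ((gen a).im:ℝ)^2 ≤ Y * Real.sqrt d := by
    intro a
    obtain ⟨hne, hp, hprim, hnorm⟩ := a.2
    have hspan : Ideal.span {gen a} = a.1 := hgen_span a
    have hx0 : gen a ≠ 0 := by
      intro h0
      refine hprim 2 one_lt_two ?_
      rw [← hspan, h0, Ideal.span_le]
      simp
    have him : (gen a).im ≠ 0 := by
      intro him0
      have hxe : gen a = ((gen a).re : ℤ√(-(d:ℤ))) := by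
        ext <;> simp [him0]
      have hre0 : (gen a).re ≠ 0 := by
        intro h; apply hx0; rw [hxe, h]; simp
      set n := (gen a).re.natAbs with hn
      have hn0 : n ≠ 0 := Int.natAbs_ne_zero.mpr hre0
      have hdvd : ((n:ℕ) : ℤ√(-(d:ℤ))) ∣ gen a := by
        rw [hxe]
        have h1 : ((n:ℤ) : ℤ√(-(d:ℤ))) ∣ (((gen a).re : ℤ) : ℤ√(-(d:ℤ))) :=
          map_dvd (Int.castRingHom _) (Int.natAbs_dvd.mpr dvd_rfl)
        simpa using h1
      have hle : a.1 ≤ Ideal.span {((n:ℕ) : ℤ√(-(d:ℤ)))} := by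
        rw [← hspan, Ideal.span_le, Set.singleton_subset_iff, SetLike.mem_coe,
          Ideal.mem_span_singleton]
        exact hdvd
      rcases Nat.lt_or_ge 1 n with h1n | h1n
      · exact hprim n h1n hle
      · interval_cases n
        · exact hn0 rfl
        · -- n = 1 : gen a is a unit, so a = ⊤
          apply hne
          rw [← hspan, Ideal.span_singleton_eq_top]
          rw [hxe]
          rcases Int.natAbs_eq_iff.mp hn.symm with h | h
          · rw [h]; simp
          · rw [h]; simp
    refine ⟨him, ?_⟩
    -- norm computation
    have hcard : (idealNorm a.1 : ℤ) = (gen a).norm := by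
      rw [idealNorm, ← hspan, hcq _ hx0, halg]
      exact Int.natAbs_of_nonneg (Zsqrtd.norm_nonneg (neg_nonpos.mpr (Int.natCast_nonneg d)) _)
    have hnf : ((gen a).norm : ℝ) = ((gen a).re:ℝ)^2 + (d:ℝ) * ((gen a).im:ℝ)^2 := by
      rw [Zsqrtd.norm_def]; push_cast; ring
    have : ((gen a).norm : ℝ) ≤ Y * Real.sqrt d := by
      calc ((gen a).norm : ℝ) = ((idealNorm a.1 : ℤ) : ℝ) := by rw [hcard]
        _ = (idealNorm a.1 : ℝ) := by push_cast; ring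
        _ ≤ Y * Real.sqrt d := hnorm
    linarith [hnf ▸ this]
  have hsdY : Nonempty T → Real.sqrt d ≤ Y := by
    rintro ⟨a⟩
    obtain ⟨him, hle⟩ := key a
    have h1 : (1:ℝ) ≤ ((gen a).im:ℝ)^2 := by
      have : (1:ℤ) ≤ (gen a).im^2 := by
        rcases him.lt_or_gt with h | h <;> nlinarith
      exact_mod_cast this
    have hd_le : (d:ℝ) ≤ Y * Real.sqrt d := by nlinarith [sq_nonneg ((gen a).re:ℝ)]
    have h2 : Real.sqrt d * Real.sqrt d ≤ Y * Real.sqrt d := by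
      rwa [Real.mul_self_sqrt hd0.le]
    exact le_of_mul_le_mul_right h2 hsd0
  by_cases hcase : (d:ℝ) ≤ Y^2
  · rw [if_pos hcase]
    rcases isEmpty_or_nonempty T with hT | hT
    · rw [Nat.card_of_isEmpty]
      simp only [Nat.cast_zero]
      positivity
    have hsY : Real.sqrt d ≤ Y := hsdY hT
    have hY1 : 1 ≤ Y := le_trans hsd1 hsY
    set A : ℕ := ⌊Real.sqrt (Y * Real.sqrt d)⌋₊ with hA_def
    set B : ℕ := ⌊Real.sqrt (Y / Real.sqrt d)⌋₊ with hB_def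
    set F : Finset (ℤ × ℤ) :=
      (Finset.Icc (-(A:ℤ)) (A:ℤ)) ×ˢ (Finset.Icc (-(B:ℤ)) (B:ℤ)) with hF_def
    have hmem : ∀ a : T, ((gen a).re, (gen a).im) ∈ F := by
      intro a
      obtain ⟨him, hle⟩ := key a
      have hre2 : ((gen a).re:ℝ)^2 ≤ Y * Real.sqrt d := by nlinarith [sq_nonneg ((gen a).im:ℝ)]
      have him2 : ((gen a).im:ℝ)^2 ≤ Y / Real.sqrt d := by
        rw [le_div_iff₀ hsd0]
        nlinarith [sq_nonneg ((gen a).re:ℝ), Real.sq_sqrt hd0.le]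
      have hreA : (gen a).re.natAbs ≤ A := by
        apply Nat.le_floor
        have : ((gen a).re.natAbs : ℝ) = |((gen a).re:ℝ)| := by
          rw [Nat.cast_natAbs]; push_cast; ring
        rw [this, ← Real.sqrt_sq_eq_abs]
        exact Real.sqrt_le_sqrt hre2
      have himB : (gen a).im.natAbs ≤ B := by
        apply Nat.le_floor
        have : ((gen a).im.natAbs : ℝ) = |((gen a).im:ℝ)| := by
          rw [Nat.cast_natAbs]; push_cast; ring
        rw [this, ← Real.sqrt_sq_eq_abs]
        exact Real.sqrt_le_sqrt him2
      rw [hF_def, Finset.mem_product, Finset.mem_Icc, Finset.mem_Icc]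
      have h1 : |(gen a).re| ≤ (A:ℤ) := by
        rw [Int.abs_eq_natAbs]; exact_mod_cast hreA
      have h2 : |(gen a).im| ≤ (B:ℤ) := by
        rw [Int.abs_eq_natAbs]; exact_mod_cast himB
      constructor
      · constructor <;> [exact neg_le_of_abs_le h1; exact le_of_abs_le h1]
      · constructor <;> [exact neg_le_of_abs_le h2; exact le_of_abs_le h2]
    let f : T → {p : ℤ × ℤ // p ∈ F} := fun a => ⟨((gen a).re, (gen a).im), hmem a⟩
    have hf_inj : Function.Injective f := by
      intro a b hab
      have h1 : gen a = gen b := by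
        have hre : (gen a).re = (gen b).re := congrArg (Prod.fst ∘ Subtype.val) hab
        have him : (gen a).im = (gen b).im := congrArg (Prod.snd ∘ Subtype.val) hab
        ext <;> assumption
      have : a.1 = b.1 := by rw [← hgen_span a, ← hgen_span b, h1]
      exact Subtype.ext this
    have hcard_le : Nat.card T ≤ F.card := by
      calc Nat.card T ≤ Nat.card {p : ℤ × ℤ // p ∈ F} := Nat.card_le_card_of_injective f hf_inj
        _ = F.card := Nat.card_eq_finsetCard F
    have hFcard : (F.card : ℝ) = (2*(A:ℝ)+1) * (2*(B:ℝ)+1) := by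
      rw [hF_def, Finset.card_product, Int.card_Icc, Int.card_Icc]
      have h1 : ((A:ℤ) + 1 - (-(A:ℤ))).toNat = 2*A+1 := by omega
      have h2 : ((B:ℤ) + 1 - (-(B:ℤ))).toNat = 2*B+1 := by omega
      rw [h1, h2]; push_cast; ring
    -- bounds on A and B
    have hYsd : 0 ≤ Y * Real.sqrt d := by positivity
    have hA1 : (A:ℝ) ≤ Real.sqrt (Y * Real.sqrt d) := Nat.floor_le (Real.sqrt_nonneg _)
    have hB1 : (B:ℝ) ≤ Real.sqrt (Y / Real.sqrt d) := Nat.floor_le (Real.sqrt_nonneg _)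
    have hAY : Real.sqrt (Y * Real.sqrt d) ≤ Y := by
      have : Y * Real.sqrt d ≤ Y^2 := by nlinarith
      calc Real.sqrt (Y * Real.sqrt d) ≤ Real.sqrt (Y^2) := Real.sqrt_le_sqrt this
        _ = Y := Real.sqrt_sq hY.le
    have hBY : Real.sqrt (Y / Real.sqrt d) ≤ Y := by
      have h1 : Y / Real.sqrt d ≤ Y := by
        rw [div_le_iff₀ hsd0]; nlinarith
      calc Real.sqrt (Y / Real.sqrt d) ≤ Real.sqrt Y := Real.sqrt_le_sqrt h1
        _ ≤ Y := by nlinarith [Real.sq_sqrt hY.le, Real.sqrt_nonneg Y,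
            sq_nonneg (Real.sqrt Y - 1)]
    have hAB : (A:ℝ) * (B:ℝ) ≤ Y := by
      have hYd : 0 ≤ Y / Real.sqrt d := by positivity
      calc (A:ℝ) * (B:ℝ) ≤ Real.sqrt (Y * Real.sqrt d) * Real.sqrt (Y / Real.sqrt d) :=
            mul_le_mul hA1 hB1 (by positivity) (Real.sqrt_nonneg _)
        _ = Real.sqrt ((Y * Real.sqrt d) * (Y / Real.sqrt d)) := (Real.sqrt_mul hYsd _).symm
        _ = Real.sqrt (Y^2) := by congr 1; field_simp
        _ = Y := Real.sqrt_sq hY.le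
    have hA0 : (0:ℝ) ≤ (A:ℝ) := Nat.cast_nonneg _
    have hB0 : (0:ℝ) ≤ (B:ℝ) := Nat.cast_nonneg _
    calc (Nat.card T : ℝ) ≤ (F.card : ℝ) := by exact_mod_cast hcard_le
      _ = (2*(A:ℝ)+1) * (2*(B:ℝ)+1) := hFcard
      _ ≤ 10 * Y := by nlinarith [hA1.trans hAY, hB1.trans hBY]
  · rw [if_neg hcase]
    have hTe : IsEmpty T := by
      by_contra h
      rw [not_isEmpty_iff] at h
      have hsY := hsdY h
      exact hcase (by nlinarith [Real.sq_sqrt hd0.le])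
    rw [Nat.card_of_isEmpty]
    simp

end CPPaux

/-- The number of primitive principal ideals `a ≠ (1)` with `N(a) ≤ Y√d`, summed over
squarefree `d ≡ 2 (mod 4)` with `d ≤ D`, is `O(Y³)` uniformly in `D`. -/
theorem count_primitive_principal :
    ∃ C : ℝ, ∀ D : ℕ, ∀ Y : ℝ, 0 < Y →
      (∑ d ∈ Finset.Icc 1 D,
        if Squarefree d ∧ d % 4 = 2 then
          (Nat.card {a : Ideal (ℤ√(-(d:ℤ))) //
            a ≠ ⊤ ∧ a.IsPrincipal ∧ IsPrimitiveIdeal a ∧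
            (idealNorm a : ℝ) ≤ Y * Real.sqrt d} : ℝ)
        else 0) ≤ C * Y ^ 3 := by
  classical
  refine ⟨10, fun D Y hY => ?_⟩
  have step1 : ∀ d ∈ Finset.Icc 1 D,
      (if Squarefree d ∧ d % 4 = 2 then
          (Nat.card {a : Ideal (ℤ√(-(d:ℤ))) //
            a ≠ ⊤ ∧ a.IsPrincipal ∧ IsPrimitiveIdeal a ∧
            (idealNorm a : ℝ) ≤ Y * Real.sqrt d} : ℝ)
        else 0) ≤ (if (d:ℝ) ≤ Y^2 then 10*Y else 0) := by
    intro d hd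
    have hd1 : 1 ≤ d := (Finset.mem_Icc.mp hd).1
    by_cases hsq : Squarefree d ∧ d % 4 = 2
    · rw [if_pos hsq]
      haveI : IsDomain (ℤ√(-(d:ℤ))) := CPPaux.isDomain_of_neg (by
        have : (0:ℤ) < (d:ℤ) := by exact_mod_cast hd1
        omega)
      exact CPPaux.per_d d hd1 Y hY (fun x => CPPaux.algebraNorm_eq x)
        (fun x hx => CPPaux.card_quot_span_singleton x hx)
    · rw [if_neg hsq]
      split
      · positivity
      · exact le_refl 0
  calc (∑ d ∈ Finset.Icc 1 D,
        if Squarefree d ∧ d % 4 = 2 then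
          (Nat.card {a : Ideal (ℤ√(-(d:ℤ))) //
            a ≠ ⊤ ∧ a.IsPrincipal ∧ IsPrimitiveIdeal a ∧
            (idealNorm a : ℝ) ≤ Y * Real.sqrt d} : ℝ)
        else 0)
      ≤ ∑ d ∈ Finset.Icc 1 D, (if (d:ℝ) ≤ Y^2 then 10*Y else 0) := Finset.sum_le_sum step1
    _ = ∑ d ∈ (Finset.Icc 1 D).filter (fun d : ℕ => (d:ℝ) ≤ Y^2), 10*Y :=
        (Finset.sum_filter _ _).symm
    _ = ((Finset.Icc 1 D).filter (fun d : ℕ => (d:ℝ) ≤ Y^2)).card • (10*Y) := Finset.sum_const _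
    _ ≤ 10 * Y^3 := by
        rw [nsmul_eq_mul]
        have hsub : (Finset.Icc 1 D).filter (fun d : ℕ => (d:ℝ) ≤ Y^2) ⊆ Finset.Icc 1 ⌊Y^2⌋₊ := by
          intro d hd
          rw [Finset.mem_filter, Finset.mem_Icc] at hd
          rw [Finset.mem_Icc]
          exact ⟨hd.1.1, Nat.le_floor hd.2⟩
        have hcard : (((Finset.Icc 1 D).filter (fun d : ℕ => (d:ℝ) ≤ Y^2)).card : ℝ) ≤ Y^2 := by
          calc (((Finset.Icc 1 D).filter (fun d : ℕ => (d:ℝ) ≤ Y^2)).card : ℝ)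
              ≤ ((Finset.Icc 1 ⌊Y^2⌋₊).card : ℝ) := by
                exact_mod_cast Finset.card_le_card hsub
            _ ≤ (⌊Y^2⌋₊ : ℝ) := by
                rw [Nat.card_Icc]
                have : ⌊Y^2⌋₊ + 1 - 1 = ⌊Y^2⌋₊ := by omega
                rw [this]
            _ ≤ Y^2 := Nat.floor_le (sq_nonneg Y)
        calc (((Finset.Icc 1 D).filter (fun d : ℕ => (d:ℝ) ≤ Y^2)).card : ℝ) * (10*Y)
            ≤ Y^2 * (10*Y) := by
              apply mul_le_mul_of_nonneg_right hcard
              positivity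
          _ = 10 * Y^3 := by ring
end

section
/- Let φ ∈ C_c^∞(ℝ) with support in (0,∞), ψ ∈ C^∞(ℝ) Schwartz class, D, Y > 0, k odd, and define Φ_{D,Y}(x,y,z) = φ((x^k - y²)/(Dz²))·ψ((1/Y)·√(x²z²/(x^k - y²))) for x,y,z > 0 (interpreted as 0 when x^k - y² ≤ 0 in the ψ factor). Then the triple Mellin transform satisfies Φ̂_{D,Y}(α,β,γ) = D^{α/2 + kβ/4 + (k-2)γ/4}·Y^{α + kβ/2 + kγ/2}·(1/4)·Γ(β/2)Γ(γ/2 + 1)/Γ((β+γ)/2 + 1)·φ̂(α/2 + kβ/4 + (k-2)γ/4)·ψ̂(α + kβ/2 + kγ/2), where φ̂ and ψ̂ are the one-variable Mellin transforms. -/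
open MeasureTheory Complex

/-- The (complex) Mellin transform of a real function on `(0,∞)`. -/
noncomputable def mellinT (f : ℝ → ℝ) (s : ℂ) : ℂ :=
  ∫ x : ℝ in Set.Ioi (0:ℝ), (f x : ℂ) * (x : ℂ) ^ (s - 1)

section aux
open Set

lemma sqrt_cpow {r : ℝ} (hr : 0 ≤ r) (s : ℂ) :
    ((Real.sqrt r : ℝ) : ℂ) ^ s = (r : ℂ) ^ (s / 2) := by
  rw [Real.sqrt_eq_rpow, ← Complex.cpow_mul_ofReal_nonneg hr]
  norm_num
  rw [mul_comm, mul_one_div]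

lemma pow_cpow' {x : ℝ} (hx : 0 ≤ x) (k : ℕ) (s : ℂ) :
    ((x ^ k : ℝ) : ℂ) ^ s = (x : ℂ) ^ ((k : ℂ) * s) := by
  rw [← Real.rpow_natCast x k, ← Complex.cpow_mul_ofReal_nonneg hx]
  norm_num

lemma inv_cpow' {a : ℝ} (ha : 0 < a) (s : ℂ) :
    ((a⁻¹ : ℝ) : ℂ) ^ s = ((a : ℝ) : ℂ) ^ (-s) := by
  rw [Complex.ofReal_inv, Complex.inv_cpow, Complex.cpow_neg]
  rw [Complex.arg_ofReal_of_nonneg ha.le]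
  exact Real.pi_ne_zero.symm

lemma re_half (z : ℂ) : (z/2).re = z.re/2 := by simp [Complex.div_re]

lemma step_beta (β γ : ℂ) (hβ : 0 < β.re) (hγ : 0 < γ.re) :
    (∫ t in Ioi (0:ℝ), (t:ℂ)^(β/2 - 1) • ((Real.sqrt (1 - t) : ℝ):ℂ)^γ)
      = Complex.Gamma (β/2) * Complex.Gamma (γ/2+1) / Complex.Gamma ((β+γ)/2 + 1) := by
  have hγ0 : γ ≠ 0 := fun h => by simp [h] at hγ
  -- restrict to Ioo 0 1
  have h1 : (∫ t in Ioi (0:ℝ), (t:ℂ)^(β/2 - 1) • ((Real.sqrt (1 - t) : ℝ):ℂ)^γ)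
      = ∫ t in Ioo (0:ℝ) 1, (t:ℂ)^(β/2 - 1) • ((Real.sqrt (1 - t) : ℝ):ℂ)^γ := by
    set f : ℝ → ℂ := fun t => (t:ℂ)^(β/2 - 1) • ((Real.sqrt (1 - t) : ℝ):ℂ)^γ with hf
    have hres : (volume.restrict (Ioi (0:ℝ))).restrict (Ioo 0 1) = volume.restrict (Ioo 0 1) :=
      Measure.restrict_restrict_of_subset Ioo_subset_Ioi_self
    calc ∫ t in Ioi (0:ℝ), f t = ∫ t in Ioi (0:ℝ), (Ioo (0:ℝ) 1).indicator f t := by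
          refine setIntegral_congr_fun measurableSet_Ioi (fun t ht => ?_)
          by_cases h : t < 1
          · rw [indicator_of_mem (show t ∈ Ioo (0:ℝ) 1 from ⟨ht, h⟩)]
          · push_neg at h
            rw [indicator_of_notMem (fun hm => absurd hm.2 (not_lt.mpr h))]
            have h0 : Real.sqrt (1 - t) = 0 := Real.sqrt_eq_zero_of_nonpos (by linarith)
            simp only [hf, h0, Complex.ofReal_zero, Complex.zero_cpow hγ0, smul_zero]
      _ = ∫ t in Ioo (0:ℝ) 1, f t ∂(volume.restrict (Ioi 0)) := integral_indicator measurableSet_Ioo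
      _ = ∫ t in Ioo (0:ℝ) 1, f t := by rw [hres]
  have h2 : (∫ t in Ioo (0:ℝ) 1, (t:ℂ)^(β/2 - 1) • ((Real.sqrt (1 - t) : ℝ):ℂ)^γ)
      = Complex.betaIntegral (β/2) (γ/2+1) := by
    rw [Complex.betaIntegral, intervalIntegral.integral_of_le zero_le_one,
      integral_Ioc_eq_integral_Ioo]
    refine setIntegral_congr_fun measurableSet_Ioo (fun t ht => ?_)
    rw [smul_eq_mul, sqrt_cpow (by linarith [ht.2] : (0:ℝ) ≤ 1 - t) γ]
    push_cast
    ring_nf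
  rw [h1, h2]
  have hres : (β/2).re > 0 := by rw [re_half]; linarith
  have hres2 : (γ/2+1).re > 0 := by
    rw [Complex.add_re, re_half]; norm_num; linarith
  have hG := Complex.Gamma_mul_Gamma_eq_betaIntegral hres hres2
  have hsum : β/2 + (γ/2+1) = (β+γ)/2 + 1 := by ring
  rw [hsum] at hG
  have hne : Complex.Gamma ((β+γ)/2 + 1) ≠ 0 := by
    refine Complex.Gamma_ne_zero (fun m h => ?_)
    have : (((β+γ)/2 + 1):ℂ).re > 0 := by
      rw [Complex.add_re, re_half, Complex.add_re]; norm_num; linarith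
    rw [h] at this
    simp at this
    linarith [this, Nat.cast_nonneg (α := ℝ) m]
  rw [eq_div_iff hne, hG]
  ring

lemma phi_zero {φ : ℝ → ℝ} (hφsupp : tsupport φ ⊆ Set.Ioi 0) {u : ℝ} (hu : u ≤ 0) : φ u = 0 :=
  image_eq_zero_of_notMem_tsupport (fun h => absurd (hφsupp h) (by simpa using hu))

lemma step_z (φ : ℝ → ℝ) (hφsupp : tsupport φ ⊆ Set.Ioi 0) (ψ : ℝ → ℝ)
    (D Y : ℝ) (hD : 0 < D) (hY : 0 < Y) (k : ℕ)
    (γ : ℂ) (hγ : γ ≠ 0) {x y : ℝ} (hx : 0 < x) (hy : 0 < y) :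
    (∫ z in Ioi (0:ℝ), ((φ ((x ^ k - y ^ 2) / (D * z ^ 2)) *
        ψ ((1/Y) * Real.sqrt ((x ^ 2 * z ^ 2) / (x ^ k - y ^ 2))) : ℝ) : ℂ) * (z:ℂ)^(γ-1))
    = ((Y * Real.sqrt (x ^ k - y ^ 2) / x : ℝ) : ℂ) ^ γ *
      ∫ w in Ioi (0:ℝ), ((φ (x^2 / (D * Y^2 * w^2)) * ψ w : ℝ) : ℂ) * (w:ℂ)^(γ-1) := by
  set c : ℝ := x ^ k - y ^ 2 with hc
  by_cases hcpos : 0 < c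
  · have hsc : 0 < Real.sqrt c := Real.sqrt_pos.mpr hcpos
    set a : ℝ := x / (Y * Real.sqrt c) with ha
    have hapos : 0 < a := div_pos hx (mul_pos hY hsc)
    have h1 : (∫ z in Ioi (0:ℝ), ((φ (c / (D * z ^ 2)) *
          ψ ((1/Y) * Real.sqrt ((x ^ 2 * z ^ 2) / c)) : ℝ) : ℂ) * (z:ℂ)^(γ-1))
        = mellin (fun z => ((φ (x^2 / (D * Y^2 * (a*z)^2)) * ψ (a*z) : ℝ) : ℂ)) γ := by
      rw [mellin]
      refine setIntegral_congr_fun measurableSet_Ioi (fun z hz => ?_)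
      rw [smul_eq_mul, mul_comm]
      have hz0 : (0:ℝ) < z := hz
      congr 3
      · -- φ arguments
        congr 1
        have haz : (a*z)^2 = x^2*z^2/(Y^2*c) := by
          rw [ha, mul_pow, div_pow, mul_pow, Real.sq_sqrt hcpos.le]; ring
        rw [haz]
        field_simp
      · -- ψ arguments
        have : (x ^ 2 * z ^ 2) / c = (x * z / Real.sqrt c)^2 := by
          rw [div_pow, Real.sq_sqrt hcpos.le]; ring
        rw [this, Real.sqrt_sq (by positivity)]
        rw [ha]; field_simp
    have h3 := mellin_comp_mul_left (fun w => ((φ (x^2 / (D * Y^2 * w^2)) * ψ w : ℝ) : ℂ)) γ hapos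
    rw [h1, h3]
    have h2 : mellin (fun w => ((φ (x^2 / (D * Y^2 * w^2)) * ψ w : ℝ) : ℂ)) γ
        = ∫ w in Ioi (0:ℝ), ((φ (x^2 / (D * Y^2 * w^2)) * ψ w : ℝ) : ℂ) * (w:ℂ)^(γ-1) := by
      rw [mellin]
      refine setIntegral_congr_fun measurableSet_Ioi (fun w hw => ?_)
      rw [smul_eq_mul, mul_comm]
    rw [h2, smul_eq_mul]
    congr 1
    have : Y * Real.sqrt c / x = a⁻¹ := by rw [ha]; field_simp
    rw [this, inv_cpow' hapos γ]
  · push_neg at hcpos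
    have hL : (∫ z in Ioi (0:ℝ), ((φ (c / (D * z ^ 2)) *
          ψ ((1/Y) * Real.sqrt ((x ^ 2 * z ^ 2) / c)) : ℝ) : ℂ) * (z:ℂ)^(γ-1)) = 0 := by
      have heq : EqOn (fun z:ℝ => ((φ (c / (D * z ^ 2)) *
          ψ ((1/Y) * Real.sqrt ((x ^ 2 * z ^ 2) / c)) : ℝ) : ℂ) * (z:ℂ)^(γ-1))
          (fun _ => (0:ℂ)) (Ioi 0) := by
        intro z hz
        have hz0 : (0:ℝ) < z := hz
        have : φ (c / (D * z ^ 2)) = 0 :=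
          phi_zero hφsupp (div_nonpos_of_nonpos_of_nonneg hcpos (by positivity))
        simp [this]
      rw [setIntegral_congr_fun measurableSet_Ioi heq, integral_zero]
    rw [hL]
    have : Real.sqrt c = 0 := Real.sqrt_eq_zero_of_nonpos hcpos
    rw [this]
    rw [show (Y * 0 / x : ℝ) = 0 by ring]
    simp [Complex.zero_cpow hγ]

lemma step_y (Y : ℝ) (hY : 0 < Y) (k : ℕ) (β γ : ℂ) (hβ : 0 < β.re) (hγ : 0 < γ.re)
    {x : ℝ} (hx : 0 < x) (Hx : ℂ) :
    (∫ y in Ioi (0:ℝ), (y:ℂ)^(β-1) * (((Y * Real.sqrt (x ^ k - y ^ 2) / x : ℝ) : ℂ) ^ γ * Hx))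
    = (Y:ℂ)^γ * (x:ℂ)^((k:ℂ)*(β+γ)/2 - γ) * (2⁻¹ : ℂ) *
      (Complex.Gamma (β/2) * Complex.Gamma (γ/2+1) / Complex.Gamma ((β+γ)/2 + 1)) * Hx := by
  have hxk : (0:ℝ) < x ^ k := pow_pos hx k
  set B : ℂ := Complex.Gamma (β/2) * Complex.Gamma (γ/2+1) / Complex.Gamma ((β+γ)/2 + 1) with hB
  set C : ℂ := ((Y/x : ℝ):ℂ)^γ * Hx with hC
  -- pointwise rearrangement
  have hpt : EqOn (fun y:ℝ => (y:ℂ)^(β-1) * (((Y * Real.sqrt (x ^ k - y ^ 2) / x : ℝ) : ℂ) ^ γ * Hx))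
      (fun y:ℝ => C * ((y:ℂ)^(β-1) • (((Real.sqrt (x^k - y^(2:ℝ)) : ℝ)):ℂ)^γ)) (Ioi 0) := by
    intro y hy
    have hy0 : (0:ℝ) < y := hy
    have h2 : y ^ (2:ℝ) = y ^ 2 := by
      rw [show (2:ℝ) = ((2:ℕ):ℝ) by norm_num, Real.rpow_natCast]
    have harg : (Y * Real.sqrt (x ^ k - y ^ 2) / x) = (Y/x) * Real.sqrt (x^k - y^2) := by ring
    simp only [h2, harg, Complex.ofReal_mul, smul_eq_mul, hC]
    rw [Complex.mul_cpow_ofReal_nonneg (by positivity) (Real.sqrt_nonneg _)]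
    ring
  rw [setIntegral_congr_fun measurableSet_Ioi hpt, integral_const_mul]
  -- the remaining integral is a mellin transform
  have hm1 : (∫ y in Ioi (0:ℝ), (y:ℂ)^(β-1) • (((Real.sqrt (x^k - y^(2:ℝ)) : ℝ)):ℂ)^γ)
      = mellin (fun y:ℝ => (((Real.sqrt (x^k - y^(2:ℝ)) : ℝ)):ℂ)^γ) β := rfl
  have hm2 := mellin_comp_rpow (fun u:ℝ => (((Real.sqrt (x^k - u) : ℝ)):ℂ)^γ) β (2:ℝ)
  rw [hm1, hm2]
  -- now mellin f (β / ↑(2:ℝ))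
  have hcast : (((2:ℝ)):ℂ) = (2:ℂ) := by norm_num
  rw [hcast]
  have hfeq : (fun u:ℝ => (((Real.sqrt (x^k - u) : ℝ)):ℂ)^γ)
      = fun u:ℝ => (((Real.sqrt (x^k - x^k * ((x^k)⁻¹ * u)) : ℝ)):ℂ)^γ := by
    funext u
    rw [← mul_assoc, mul_inv_cancel₀ hxk.ne', one_mul]
  rw [hfeq]
  have hm3 := mellin_comp_mul_left
    (fun t:ℝ => (((Real.sqrt (x^k - x^k * t) : ℝ)):ℂ)^γ) (β/2) (inv_pos.mpr hxk)
  rw [hm3, inv_cpow' hxk (-(β/2)), neg_neg]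
  -- simplify the inner function
  have hfeq2 : (fun t:ℝ => (((Real.sqrt (x^k - x^k * t) : ℝ)):ℂ)^γ)
      = fun t:ℝ => ((Real.sqrt (x^k) : ℝ):ℂ)^γ * (((Real.sqrt (1 - t) : ℝ)):ℂ)^γ := by
    funext t
    rw [show x^k - x^k * t = x^k * (1-t) by ring, Real.sqrt_mul hxk.le,
      Complex.ofReal_mul, Complex.mul_cpow_ofReal_nonneg (Real.sqrt_nonneg _) (Real.sqrt_nonneg _)]
  rw [hfeq2]
  have hmel4 : mellin (fun t:ℝ => ((Real.sqrt (x^k) : ℝ):ℂ)^γ * (((Real.sqrt (1 - t) : ℝ)):ℂ)^γ) (β/2)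
      = ((Real.sqrt (x^k) : ℝ):ℂ)^γ * mellin (fun t:ℝ => (((Real.sqrt (1 - t) : ℝ)):ℂ)^γ) (β/2) := by
    rw [mellin, mellin]
    have : (fun t:ℝ => (t:ℂ)^(β/2-1) • (((Real.sqrt (x^k) : ℝ):ℂ)^γ * (((Real.sqrt (1 - t) : ℝ)):ℂ)^γ))
        = fun t:ℝ => ((Real.sqrt (x^k) : ℝ):ℂ)^γ * ((t:ℂ)^(β/2-1) • (((Real.sqrt (1 - t) : ℝ)):ℂ)^γ) := by
      funext t; simp only [smul_eq_mul]; ring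
    rw [this, integral_const_mul]
  rw [hmel4]
  have hm5 : mellin (fun t:ℝ => (((Real.sqrt (1 - t) : ℝ)):ℂ)^γ) (β/2) = B := by
    rw [mellin, hB]
    exact step_beta β γ hβ hγ
  rw [hm5]
  simp only [smul_eq_mul, Complex.real_smul, Complex.ofReal_inv, abs_of_pos (two_pos : (0:ℝ) < 2),
    Complex.ofReal_ofNat]
  rw [sqrt_cpow hxk.le γ, pow_cpow' hx.le k (β/2), pow_cpow' hx.le k (γ/2)]
  have hYx : ((Y/x : ℝ):ℂ)^γ = ((Y:ℝ):ℂ)^γ * ((x:ℝ):ℂ)^(-γ) := by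
    rw [div_eq_mul_inv, Complex.ofReal_mul,
      Complex.mul_cpow_ofReal_nonneg hY.le (inv_nonneg.mpr hx.le), inv_cpow' hx γ]
  rw [hC, hYx]
  have hxne : ((x:ℝ):ℂ) ≠ 0 := Complex.ofReal_ne_zero.mpr hx.ne'
  have hcomb : (x:ℂ)^(-γ) * ((x:ℂ)^((k:ℂ)*(β/2)) * (x:ℂ)^((k:ℂ)*(γ/2)))
      = (x:ℂ)^((k:ℂ)*(β+γ)/2 - γ) := by
    rw [← Complex.cpow_add _ _ hxne, ← Complex.cpow_add _ _ hxne]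
    congr 1; ring
  calc ((Y:ℝ):ℂ)^γ * ((x:ℝ):ℂ)^(-γ) * Hx * (2⁻¹ * ((x:ℂ)^((k:ℂ)*(β/2)) * ((x:ℂ)^((k:ℂ)*(γ/2)) * B)))
      = ((Y:ℝ):ℂ)^γ * ((x:ℂ)^(-γ) * ((x:ℂ)^((k:ℂ)*(β/2)) * (x:ℂ)^((k:ℂ)*(γ/2)))) * 2⁻¹ * B * Hx := by
        ring
    _ = (Y:ℂ)^γ * (x:ℂ)^((k:ℂ)*(β+γ)/2 - γ) * (2⁻¹:ℂ) * B * Hx := by rw [hcomb]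

lemma compact_subset_Icc {K : Set ℝ} (hK : IsCompact K) (hsub : K ⊆ Ioi 0) :
    ∃ ε M : ℝ, 0 < ε ∧ ε ≤ M ∧ K ⊆ Icc ε M := by
  rcases K.eq_empty_or_nonempty with h | h
  · exact ⟨1, 1, one_pos, le_refl _, by simp [h]⟩
  · obtain ⟨a, ha⟩ := hK.exists_isLeast h
    obtain ⟨b, hb⟩ := hK.exists_isGreatest h
    exact ⟨a, b, hsub ha.1, hb.2 ha.1, fun u hu => ⟨ha.2 hu, hb.2 hu⟩⟩

lemma schwartz_int (ψ : SchwartzMap ℝ ℝ) {ρ : ℝ} (hρ : 0 < ρ) :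
    Integrable (fun w => ‖ψ w‖ * w ^ (ρ - 1)) (volume.restrict (Ioi 0)) := by
  have hcont : ∀ s : Set ℝ, s ⊆ Ioi 0 → ContinuousOn (fun w : ℝ => ‖ψ w‖ * w ^ (ρ - 1)) s := by
    intro s hs
    apply ContinuousOn.mul (ψ.continuous.norm.continuousOn)
    intro w hw
    exact (Real.continuousAt_rpow_const w _ (Or.inl (ne_of_gt (hs hw)))).continuousWithinAt
  have hsplit : Ioc (0:ℝ) 1 ∪ Ioi 1 = Ioi 0 := Ioc_union_Ioi_eq_Ioi zero_le_one
  rw [show Ioi (0:ℝ) = Ioc 0 1 ∪ Ioi 1 from hsplit.symm]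
  apply IntegrableOn.union
  · -- on (0,1]
    obtain ⟨C₀, hC₀pos, hC₀⟩ := ψ.decay 0 0
    have hb : ∀ x : ℝ, ‖ψ x‖ ≤ C₀ := by
      intro x
      have := hC₀ x
      rwa [pow_zero, one_mul, norm_iteratedFDeriv_zero] at this
    have hint : IntegrableOn (fun w : ℝ => C₀ * w ^ (ρ - 1)) (Ioc 0 1) :=
      ((intervalIntegrable_iff_integrableOn_Ioc_of_le zero_le_one).mp
        (intervalIntegral.intervalIntegrable_rpow' (by linarith))).const_mul C₀
    apply hint.mono' ((hcont _ (Ioc_subset_Ioi_self)).aestronglyMeasurable measurableSet_Ioc)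
    rw [ae_restrict_iff' measurableSet_Ioc]
    refine Filter.Eventually.of_forall (fun w hw => ?_)
    have hw0 : 0 < w := hw.1
    rw [Real.norm_eq_abs, _root_.abs_of_nonneg (mul_nonneg (norm_nonneg _) (Real.rpow_nonneg hw0.le _))]
    exact mul_le_mul_of_nonneg_right (hb w) (Real.rpow_nonneg hw0.le _)
  · -- on (1,∞)
    set N : ℕ := ⌈ρ⌉₊ + 1 with hN
    obtain ⟨C₁, hC₁pos, hC₁⟩ := ψ.decay N 0
    have hint : IntegrableOn (fun w : ℝ => C₁ * w ^ (-2 : ℝ)) (Ioi 1) :=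
      (integrableOn_Ioi_rpow_of_lt (by norm_num) one_pos).const_mul C₁
    apply hint.mono' ((hcont _ (Ioi_subset_Ioi zero_le_one)).aestronglyMeasurable measurableSet_Ioi)
    rw [ae_restrict_iff' measurableSet_Ioi]
    refine Filter.Eventually.of_forall (fun w hw => ?_)
    have hw1 : 1 < w := hw
    have hw0 : 0 < w := lt_trans one_pos hw1
    rw [Real.norm_eq_abs, _root_.abs_of_nonneg (mul_nonneg (norm_nonneg _) (Real.rpow_nonneg hw0.le _))]
    have hψw : ‖ψ w‖ ≤ C₁ * w ^ (-(N:ℝ)) := by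
      have h1 := hC₁ w
      rw [norm_iteratedFDeriv_zero, Real.norm_eq_abs, abs_of_pos hw0] at h1
      rw [Real.rpow_neg hw0.le, Real.rpow_natCast]
      rw [mul_comm] at h1
      exact (le_div_iff₀ (pow_pos hw0 N)).mpr h1 |>.trans_eq (by rw [div_eq_mul_inv])
    calc ‖ψ w‖ * w ^ (ρ - 1) ≤ (C₁ * w ^ (-(N:ℝ))) * w ^ (ρ - 1) :=
          mul_le_mul_of_nonneg_right hψw (Real.rpow_nonneg hw0.le _)
      _ = C₁ * w ^ (ρ - 1 - N) := by
          rw [mul_assoc, ← Real.rpow_add hw0]; ring_nf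
      _ ≤ C₁ * w ^ (-2 : ℝ) := by
          apply mul_le_mul_of_nonneg_left _ hC₁pos.le
          apply Real.rpow_le_rpow_of_exponent_le hw1.le
          have : ρ ≤ (⌈ρ⌉₊ : ℝ) := Nat.le_ceil ρ
          have hNval : (N : ℝ) = (⌈ρ⌉₊ : ℝ) + 1 := by rw [hN]; push_cast; ring
          linarith

lemma fubini_int (φ : ℝ → ℝ) (hφc : HasCompactSupport φ) (hφcont : Continuous φ)
    (hφsupp : tsupport φ ⊆ Ioi 0) (ψ : SchwartzMap ℝ ℝ) (c : ℝ) (hc : 0 < c)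
    (s γ : ℂ) (hsγ : 0 < (s+γ).re) :
    Integrable (Function.uncurry fun x w : ℝ =>
        (x:ℂ)^(s - 1) * ((φ (x^2 / (c * w^2)) * ψ w : ℝ) : ℂ) * (w:ℂ)^(γ-1))
      ((volume.restrict (Ioi 0)).prod (volume.restrict (Ioi 0))) := by
  obtain ⟨ε, M, hε, hεM, hsub⟩ := compact_subset_Icc hφc hφsupp
  have hφ0 : ∀ u, u ∉ Icc ε M → φ u = 0 :=
    fun u hu => image_eq_zero_of_notMem_tsupport (fun h => hu (hsub h))
  set a : ℝ := Real.sqrt (ε * c) with haa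
  set b : ℝ := Real.sqrt (M * c) with hbb
  have ha : 0 < a := Real.sqrt_pos.mpr (by positivity)
  have hab : a ≤ b := Real.sqrt_le_sqrt (by nlinarith)
  obtain ⟨Cφ, hCφ⟩ := hφc.exists_bound_of_continuous hφcont
  have hCφ0 : 0 ≤ Cφ := le_trans (norm_nonneg _) (hCφ 0)
  set F : ℝ → ℝ → ℂ := fun x w =>
    (x:ℂ)^(s - 1) * ((φ (x^2 / (c * w^2)) * ψ w : ℝ) : ℂ) * (w:ℂ)^(γ-1) with hF
  -- key support localization
  have key : ∀ x w : ℝ, 0 < w → φ (x^2/(c*w^2)) ≠ 0 → x^2 ∈ Icc ((a*w)^2) ((b*w)^2) := by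
    intro x w hw hne
    have hmem : x^2/(c*w^2) ∈ Icc ε M := by
      by_contra h; exact hne (hφ0 _ h)
    have hcw : (0:ℝ) < c * w^2 := by positivity
    constructor
    · have h1 : ε * (c*w^2) ≤ x^2 := (le_div_iff₀ hcw).mp hmem.1
      have h2 : (a*w)^2 = ε*c*w^2 := by
        rw [mul_pow, haa, Real.sq_sqrt (by positivity)]
      nlinarith
    · have h1 : x^2 ≤ M * (c*w^2) := (div_le_iff₀ hcw).mp hmem.2
      have h2 : (b*w)^2 = M*c*w^2 := by
        rw [mul_pow, hbb, Real.sq_sqrt (by nlinarith : (0:ℝ) ≤ M * c)]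
      nlinarith
  have key2 : ∀ x w : ℝ, 0 < x → 0 < w → φ (x^2/(c*w^2)) ≠ 0 → x ∈ Icc (a*w) (b*w) := by
    intro x w hx hw hne
    obtain ⟨h1, h2⟩ := key x w hw hne
    constructor
    · nlinarith [mul_pos ha hw]
    · nlinarith [mul_pos (lt_of_lt_of_le ha hab) hw, hx]
  -- a.e. strong measurability on the product
  have hmeas : AEStronglyMeasurable (Function.uncurry F)
      ((volume.restrict (Ioi 0)).prod (volume.restrict (Ioi 0))) := by
    rw [Measure.prod_restrict]
    apply ContinuousOn.aestronglyMeasurable _ (measurableSet_Ioi.prod measurableSet_Ioi)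
    intro p hp
    have hp1 : (0:ℝ) < p.1 := hp.1
    have hp2 : (0:ℝ) < p.2 := hp.2
    apply ContinuousAt.continuousWithinAt
    have c1 : ContinuousAt (fun q : ℝ × ℝ => ((q.1 : ℝ):ℂ)^(s-1)) p :=
      (continuousAt_ofReal_cpow_const _ _ (Or.inr hp1.ne')).comp continuousAt_fst
    have c3 : ContinuousAt (fun q : ℝ × ℝ => ((q.2 : ℝ):ℂ)^(γ-1)) p :=
      (continuousAt_ofReal_cpow_const _ _ (Or.inr hp2.ne')).comp continuousAt_snd
    have c2 : ContinuousAt (fun q : ℝ × ℝ => ((φ (q.1^2 / (c * q.2^2)) * ψ q.2 : ℝ) : ℂ)) p := by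
      apply Complex.continuous_ofReal.continuousAt.comp
      apply ContinuousAt.mul
      · apply hφcont.continuousAt.comp
        apply ContinuousAt.div
        · exact (continuous_fst.pow 2).continuousAt
        · exact (continuous_const.mul (continuous_snd.pow 2)).continuousAt
        · exact ne_of_gt (mul_pos hc (pow_pos hp2 2))
      · exact ψ.continuous.continuousAt.comp continuousAt_snd
    exact (c1.mul c2).mul c3
  -- sectionwise integrability in x, for fixed w > 0
  have hsec : ∀ w : ℝ, 0 < w → Integrable (fun x => F x w) (volume.restrict (Ioi 0)) := by
    intro w hw
    have habw : 0 < a * w := mul_pos ha hw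
    have hIcc : IntegrableOn (fun x => F x w) (Icc (a*w) (b*w)) := by
      apply ContinuousOn.integrableOn_compact isCompact_Icc
      intro x hx
      have hx0 : 0 < x := lt_of_lt_of_le habw hx.1
      apply ContinuousAt.continuousWithinAt
      have c1 : ContinuousAt (fun x : ℝ => ((x : ℝ):ℂ)^(s-1)) x :=
        continuousAt_ofReal_cpow_const _ _ (Or.inr hx0.ne')
      have c2 : ContinuousAt (fun x : ℝ => ((φ (x^2 / (c * w^2)) * ψ w : ℝ) : ℂ)) x := by
        apply Complex.continuous_ofReal.continuousAt.comp
        apply ContinuousAt.mul _ continuousAt_const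
        apply hφcont.continuousAt.comp
        apply ContinuousAt.div ((continuous_pow 2).continuousAt) continuousAt_const
        exact ne_of_gt (mul_pos hc (pow_pos hw 2))
      exact (c1.mul c2).mul continuousAt_const
    -- extend to Ioi 0
    have : Ioi (0:ℝ) = (Ioi 0 ∩ Icc (a*w) (b*w)) ∪ (Ioi 0 \ Icc (a*w) (b*w)) :=
      (inter_union_diff _ _).symm
    rw [show (volume.restrict (Ioi (0:ℝ))) = volume.restrict (Ioi 0) from rfl]
    rw [← IntegrableOn, this]
    apply IntegrableOn.union
    · exact hIcc.mono_set inter_subset_right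
    · rw [integrableOn_congr_fun _ (measurableSet_Ioi.diff measurableSet_Icc)]
      · exact integrableOn_zero
      · intro x hx
        have : φ (x^2/(c*w^2)) = 0 := by
          by_contra hne
          exact hx.2 (key2 x w hx.1 hw hne)
        simp [hF, this]
  rw [integrable_prod_iff' hmeas]
  constructor
  · rw [ae_restrict_iff' measurableSet_Ioi]
    exact Filter.Eventually.of_forall (fun w hw => hsec w hw)
  · -- integrability of the integrated norm
    set σ : ℝ := s.re with hσ
    set τ : ℝ := γ.re with hτ
    set C₁ : ℝ := (a ^ (σ-1) + b ^ (σ-1)) * Cφ * (b - a) with hC₁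
    have hC₁0 : 0 ≤ C₁ := by
      apply mul_nonneg (mul_nonneg _ hCφ0) (by linarith)
      positivity
    have hgint : Integrable (fun w => C₁ * (‖ψ w‖ * w ^ ((s+γ).re - 1)))
        (volume.restrict (Ioi 0)) := (schwartz_int ψ hsγ).const_mul C₁
    apply hgint.mono'
    · have h1 : AEStronglyMeasurable (fun z : ℝ × ℝ => ‖Function.uncurry F z.swap‖)
          ((volume.restrict (Ioi 0)).prod (volume.restrict (Ioi 0))) :=
        AEStronglyMeasurable.prod_swap hmeas.norm
      exact h1.integral_prod_right'
    rw [ae_restrict_iff' measurableSet_Ioi]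
    refine Filter.Eventually.of_forall (fun w hw => ?_)
    have hw0 : (0:ℝ) < w := hw
    set K : ℝ := ((a*w) ^ (σ-1) + (b*w) ^ (σ-1)) * (Cφ * ‖ψ w‖) * w ^ (τ-1) with hK
    have hK0 : 0 ≤ K := by
      apply mul_nonneg (mul_nonneg _ (mul_nonneg hCφ0 (norm_nonneg _)))
        (Real.rpow_nonneg hw0.le _)
      positivity
    -- pointwise bound for the section
    have hptb : ∀ᵐ x ∂(volume.restrict (Ioi (0:ℝ))),
        ‖F x w‖ ≤ (Icc (a*w) (b*w)).indicator (fun _ => K) x := by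
      rw [ae_restrict_iff' measurableSet_Ioi]
      refine Filter.Eventually.of_forall (fun x hx => ?_)
      have hx0 : (0:ℝ) < x := hx
      by_cases hmem : x ∈ Icc (a*w) (b*w)
      · rw [indicator_of_mem hmem]
        have hnorm : ‖F x w‖ = x ^ (σ-1) * (|φ (x^2/(c*w^2))| * |ψ w|) * w ^ (τ-1) := by
          rw [hF]
          simp only [norm_mul, Complex.norm_real, Real.norm_eq_abs]
          rw [Complex.norm_cpow_eq_rpow_re_of_pos hx0, Complex.norm_cpow_eq_rpow_re_of_pos hw0]
          simp only [Complex.sub_re, Complex.one_re, abs_mul]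
          rfl
        rw [hnorm, hK]
        apply mul_le_mul_of_nonneg_right _ (Real.rpow_nonneg hw0.le _)
        apply mul_le_mul
        · rcases le_or_gt 0 (σ-1) with he | he
          · calc x ^ (σ-1) ≤ (b*w) ^ (σ-1) :=
                  Real.rpow_le_rpow hx0.le hmem.2 he
              _ ≤ (a*w) ^ (σ-1) + (b*w) ^ (σ-1) := by
                  have : (0:ℝ) ≤ (a*w) ^ (σ-1) := Real.rpow_nonneg (by positivity) _
                  linarith
          · calc x ^ (σ-1) ≤ (a*w) ^ (σ-1) :=
                  Real.rpow_le_rpow_of_nonpos (mul_pos ha hw0) hmem.1 he.le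
              _ ≤ (a*w) ^ (σ-1) + (b*w) ^ (σ-1) := by
                  have : (0:ℝ) ≤ (b*w) ^ (σ-1) := Real.rpow_nonneg (by positivity) _
                  linarith
        · have h1 : |φ (x^2/(c*w^2))| ≤ Cφ := hCφ _
          have h2 : |ψ w| ≤ ‖ψ w‖ := le_of_eq (Real.norm_eq_abs _).symm
          exact mul_le_mul h1 h2 (abs_nonneg _) hCφ0
        · positivity
        · positivity
      · rw [indicator_of_notMem hmem]
        have : φ (x^2/(c*w^2)) = 0 := by
          by_contra hne
          exact hmem (key2 x w hx0 hw0 hne)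
        rw [hF]
        simp [this]
    -- integrate the bound
    have hFint : Integrable (fun x => ‖F x w‖) (volume.restrict (Ioi 0)) := (hsec w hw0).norm
    have hKint : Integrable ((Icc (a*w) (b*w)).indicator (fun _ => K))
        (volume.restrict (Ioi 0)) := by
      apply IntegrableOn.integrable_indicator _ measurableSet_Icc
      rw [IntegrableOn]
      apply (integrableOn_const_iff (C := K)).mpr
      right
      exact lt_of_le_of_lt (Measure.restrict_apply_le _ _) measure_Icc_lt_top
    have hle1 : (∫ x, ‖F x w‖ ∂(volume.restrict (Ioi 0)))
        ≤ ∫ x, (Icc (a*w) (b*w)).indicator (fun _ => K) x ∂(volume.restrict (Ioi 0)) :=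
      integral_mono_ae hFint hKint hptb
    have hle2 : (∫ x, (Icc (a*w) (b*w)).indicator (fun _ => K) x ∂(volume.restrict (Ioi 0)))
        ≤ K * ((b-a)*w) := by
      rw [integral_indicator measurableSet_Icc, setIntegral_const, smul_eq_mul]
      apply mul_le_mul_of_nonneg_right _ hK0 |>.trans_eq (mul_comm _ K)
      have hm1 : (volume.restrict (Ioi (0:ℝ))) (Icc (a*w) (b*w)) ≤ volume (Icc (a*w) (b*w)) :=
        Measure.restrict_apply_le _ _
      have hm2 : volume (Icc (a*w) (b*w)) = ENNReal.ofReal ((b-a)*w) := by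
        rw [Real.volume_Icc]; congr 1; ring
      calc ((volume.restrict (Ioi (0:ℝ))) (Icc (a*w) (b*w))).toReal
          ≤ (volume (Icc (a*w) (b*w))).toReal := by
            apply ENNReal.toReal_mono _ hm1
            rw [hm2]; exact ENNReal.ofReal_ne_top
        _ = (b-a)*w := by
            rw [hm2, ENNReal.toReal_ofReal (mul_nonneg (by linarith) hw0.le)]
    have heq : K * ((b-a)*w) = C₁ * (‖ψ w‖ * w ^ ((s+γ).re - 1)) := by
      rw [hK, hC₁]
      rw [Real.mul_rpow ha.le hw0.le, Real.mul_rpow (le_trans ha.le hab) hw0.le]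
      have hexp : w ^ (σ-1) * w ^ (τ-1) * w ^ (1:ℝ) = w ^ ((s+γ).re - 1) := by
        rw [← Real.rpow_add hw0, ← Real.rpow_add hw0]
        congr 1
        rw [Complex.add_re, hσ, hτ]; ring
      rw [← hexp, Real.rpow_one]; ring
    rw [Real.norm_eq_abs, _root_.abs_of_nonneg (integral_nonneg (fun x => norm_nonneg _))]
    calc (∫ x, ‖F x w‖ ∂(volume.restrict (Ioi 0))) ≤ K * ((b-a)*w) := le_trans hle1 hle2
      _ = C₁ * (‖ψ w‖ * w ^ ((s+γ).re - 1)) := heq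

lemma step_x (φ : ℝ → ℝ) (hφc : HasCompactSupport φ) (hφcont : Continuous φ)
    (hφsupp : tsupport φ ⊆ Ioi 0) (ψ : SchwartzMap ℝ ℝ)
    (D Y : ℝ) (hD : 0 < D) (hY : 0 < Y) (s γ : ℂ) (hsγ : 0 < (s+γ).re) :
    (∫ x in Ioi (0:ℝ), (x:ℂ)^(s - 1) *
       ∫ w in Ioi (0:ℝ), ((φ (x^2 / (D * Y^2 * w^2)) * ψ w : ℝ) : ℂ) * (w:ℂ)^(γ-1))
    = (2⁻¹:ℂ) * ((Y * Real.sqrt D : ℝ):ℂ)^s *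
      (∫ u in Ioi (0:ℝ), ((φ u : ℝ):ℂ) * (u:ℂ)^(s/2 - 1)) *
      (∫ w in Ioi (0:ℝ), ((ψ w : ℝ):ℂ) * (w:ℂ)^(s + γ - 1)) := by
  have hc : (0:ℝ) < D * Y^2 := by positivity
  have hsD : (0:ℝ) < Real.sqrt D := Real.sqrt_pos.mpr hD
  set Mφ : ℂ := ∫ u in Ioi (0:ℝ), ((φ u : ℝ):ℂ) * (u:ℂ)^(s/2 - 1) with hMφ
  -- step 1 : pull the power inside
  have h1 : (∫ x in Ioi (0:ℝ), (x:ℂ)^(s - 1) *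
       ∫ w in Ioi (0:ℝ), ((φ (x^2 / (D * Y^2 * w^2)) * ψ w : ℝ) : ℂ) * (w:ℂ)^(γ-1))
      = ∫ x in Ioi (0:ℝ), ∫ w in Ioi (0:ℝ),
          (x:ℂ)^(s - 1) * ((φ (x^2 / (D * Y^2 * w^2)) * ψ w : ℝ) : ℂ) * (w:ℂ)^(γ-1) := by
    refine setIntegral_congr_fun measurableSet_Ioi (fun x hx => ?_)
    rw [← integral_const_mul]
    exact setIntegral_congr_fun measurableSet_Ioi (fun w hw => by ring)
  rw [h1]
  -- step 2 : Fubini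
  rw [integral_integral_swap (fubini_int φ hφc hφcont hφsupp ψ (D*Y^2) hc s γ hsγ)]
  -- step 3 : compute the inner x-integral for fixed w
  have h3 : ∀ w : ℝ, w ∈ Ioi (0:ℝ) →
      (∫ x in Ioi (0:ℝ), (x:ℂ)^(s - 1) * ((φ (x^2 / (D * Y^2 * w^2)) * ψ w : ℝ) : ℂ) * (w:ℂ)^(γ-1))
      = (2⁻¹ * ((Y * Real.sqrt D : ℝ):ℂ)^s * Mφ) * (((ψ w : ℝ):ℂ) * (w:ℂ)^(s + γ - 1)) := by
    intro w hw
    have hw0 : (0:ℝ) < w := hw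
    set A : ℝ := Y * Real.sqrt D * w with hA
    have hApos : 0 < A := by positivity
    have hA2 : A^2 = D*Y^2*w^2 := by
      rw [hA, mul_pow, mul_pow, Real.sq_sqrt hD.le]; ring
    have hstep : (∫ x in Ioi (0:ℝ),
        (x:ℂ)^(s - 1) * ((φ (x^2 / (D * Y^2 * w^2)) * ψ w : ℝ) : ℂ) * (w:ℂ)^(γ-1))
        = (((ψ w : ℝ):ℂ) * (w:ℂ)^(γ-1)) *
          ∫ x in Ioi (0:ℝ), (x:ℂ)^(s-1) * ((φ ((A⁻¹ * x)^2) : ℝ):ℂ) := by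
      rw [← integral_const_mul]
      refine setIntegral_congr_fun measurableSet_Ioi (fun x hx => ?_)
      have harg : x^2 / (D * Y^2 * w^2) = (A⁻¹ * x)^2 := by rw [← hA2]; ring
      rw [harg, Complex.ofReal_mul]
      ring
    rw [hstep]
    have hm : (∫ x in Ioi (0:ℝ), (x:ℂ)^(s-1) * ((φ ((A⁻¹ * x)^2) : ℝ):ℂ))
        = mellin (fun x : ℝ => ((φ ((A⁻¹ * x)^2) : ℝ):ℂ)) s := by
      rw [mellin]
      exact setIntegral_congr_fun measurableSet_Ioi (fun x hx => by rw [smul_eq_mul])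
    have hm2 := mellin_comp_mul_left (fun u:ℝ => ((φ (u^2) : ℝ):ℂ)) s (inv_pos.mpr hApos)
    rw [hm, hm2, inv_cpow' hApos (-s), neg_neg]
    have hfe : (fun u:ℝ => ((φ (u^2) : ℝ):ℂ)) = fun t:ℝ => ((φ (t ^ (2:ℝ)) : ℝ):ℂ) :=
      funext fun u => by rw [show (2:ℝ) = ((2:ℕ):ℝ) by norm_num, Real.rpow_natCast]
    have hm3 := mellin_comp_rpow (fun v:ℝ => ((φ v : ℝ):ℂ)) s (2:ℝ)
    rw [hfe, hm3]
    have hm4 : mellin (fun v:ℝ => ((φ v : ℝ):ℂ)) (s / ((2:ℝ):ℂ)) = Mφ := by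
      rw [show (((2:ℝ)):ℂ) = (2:ℂ) by norm_num, mellin, hMφ]
      exact setIntegral_congr_fun measurableSet_Ioi (fun u hu => by rw [smul_eq_mul, mul_comm])
    rw [hm4]
    have hAs : ((A : ℝ):ℂ)^s = ((Y * Real.sqrt D : ℝ):ℂ)^s * ((w:ℝ):ℂ)^s := by
      rw [hA, Complex.ofReal_mul (Y * Real.sqrt D) w,
        Complex.mul_cpow_ofReal_nonneg (by positivity) hw0.le]
    have hwne : ((w:ℝ):ℂ) ≠ 0 := Complex.ofReal_ne_zero.mpr hw0.ne'
    have hwpow : (w:ℂ)^(γ-1) * (w:ℂ)^s = (w:ℂ)^(s+γ-1) := by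
      rw [← Complex.cpow_add _ _ hwne]; congr 1; ring
    rw [hAs]
    rw [show |(2:ℝ)|⁻¹ = ((2:ℝ))⁻¹ by norm_num]
    rw [Complex.real_smul, Complex.ofReal_inv, Complex.ofReal_ofNat]
    calc ((ψ w : ℝ):ℂ) * (w:ℂ)^(γ-1) *
          (((Y * Real.sqrt D : ℝ):ℂ)^s * (w:ℂ)^s * ((2:ℂ)⁻¹ * Mφ))
        = (2⁻¹ * ((Y * Real.sqrt D : ℝ):ℂ)^s * Mφ) * (((ψ w : ℝ):ℂ) * ((w:ℂ)^(γ-1) * (w:ℂ)^s)) := by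
          ring
      _ = (2⁻¹ * ((Y * Real.sqrt D : ℝ):ℂ)^s * Mφ) * (((ψ w : ℝ):ℂ) * (w:ℂ)^(s+γ-1)) := by
          rw [hwpow]
  rw [setIntegral_congr_fun measurableSet_Ioi h3, integral_const_mul]

end aux

/-- Factorization of the triple Mellin transform of
`Φ_{D,Y}(x,y,z) = φ((x^k - y²)/(Dz²))·ψ((1/Y)√(x²z²/(x^k - y²)))`. -/
theorem triple_mellin_factorization
    (φ : ℝ → ℝ) (hφs : ContDiff ℝ (⊤ : ℕ∞) φ) (hφc : HasCompactSupport φ)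
    (hφsupp : tsupport φ ⊆ Set.Ioi 0)
    (ψ : SchwartzMap ℝ ℝ)
    (D Y : ℝ) (hD : 0 < D) (hY : 0 < Y) (k : ℕ) (hk : Odd k)
    (α β γ : ℂ) (hα : 0 < α.re) (hβ : 0 < β.re) (hγ : 0 < γ.re) :
    (∫ x : ℝ in Set.Ioi (0:ℝ), ∫ y : ℝ in Set.Ioi (0:ℝ), ∫ z : ℝ in Set.Ioi (0:ℝ),
      ((φ ((x ^ k - y ^ 2) / (D * z ^ 2)) *
        ψ ((1/Y) * Real.sqrt ((x ^ 2 * z ^ 2) / (x ^ k - y ^ 2))) : ℝ) : ℂ) *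
        (x : ℂ) ^ (α - 1) * (y : ℂ) ^ (β - 1) * (z : ℂ) ^ (γ - 1)) =
      (D : ℂ) ^ (α/2 + k * β/4 + ((k : ℂ) - 2) * γ/4) *
      (Y : ℂ) ^ (α + k * β/2 + k * γ/2) * (1/4) *
      (Complex.Gamma (β/2) * Complex.Gamma (γ/2 + 1) / Complex.Gamma ((β + γ)/2 + 1)) *
      mellinT φ (α/2 + k * β/4 + ((k : ℂ) - 2) * γ/4) *
      mellinT (fun x => ψ x) (α + k * β/2 + k * γ/2) := by
  classical
  open Set in
  have hφcont : Continuous φ := hφs.continuous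
  have hγ0 : γ ≠ 0 := fun h => by simp [h] at hγ
  set B : ℂ := Complex.Gamma (β/2) * Complex.Gamma (γ/2 + 1) / Complex.Gamma ((β + γ)/2 + 1)
    with hB
  set s0 : ℂ := α + k * β/2 + k * γ/2 with hs0
  set s1 : ℂ := α/2 + k * β/4 + ((k : ℂ) - 2) * γ/4 with hs1
  have hkre : ∀ z : ℂ, ((k:ℂ) * z).re = (k:ℝ) * z.re := fun z => by
    rw [show ((k:ℕ):ℂ) = (((k:ℝ)):ℂ) by push_cast; ring, Complex.re_ofReal_mul]
  have hs0re : 0 < s0.re := by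
    rw [hs0, Complex.add_re, Complex.add_re,
      show ((k:ℂ)*β/2) = (k:ℂ)*(β/2) by ring, show ((k:ℂ)*γ/2) = (k:ℂ)*(γ/2) by ring,
      hkre, hkre, re_half, re_half]
    have hk0 : (0:ℝ) ≤ (k:ℝ) := Nat.cast_nonneg k
    nlinarith [hα, hβ, hγ]
  set H : ℝ → ℂ := fun x =>
    ∫ w in Ioi (0:ℝ), ((φ (x^2 / (D * Y^2 * w^2)) * ψ w : ℝ) : ℂ) * (w:ℂ)^(γ-1) with hH
  -- Step A : the two inner integrals
  have hA : ∀ x ∈ Ioi (0:ℝ),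
      (∫ y : ℝ in Ioi (0:ℝ), ∫ z : ℝ in Ioi (0:ℝ),
        ((φ ((x ^ k - y ^ 2) / (D * z ^ 2)) *
          ψ ((1/Y) * Real.sqrt ((x ^ 2 * z ^ 2) / (x ^ k - y ^ 2))) : ℝ) : ℂ) *
          (x : ℂ) ^ (α - 1) * (y : ℂ) ^ (β - 1) * (z : ℂ) ^ (γ - 1))
      = ((Y:ℂ)^γ * 2⁻¹ * B) * ((x:ℂ)^(s0 - γ - 1) * H x) := by
    intro x hx
    have hx0 : (0:ℝ) < x := hx
    have hinner : ∀ y ∈ Ioi (0:ℝ),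
        (∫ z : ℝ in Ioi (0:ℝ),
          ((φ ((x ^ k - y ^ 2) / (D * z ^ 2)) *
            ψ ((1/Y) * Real.sqrt ((x ^ 2 * z ^ 2) / (x ^ k - y ^ 2))) : ℝ) : ℂ) *
            (x : ℂ) ^ (α - 1) * (y : ℂ) ^ (β - 1) * (z : ℂ) ^ (γ - 1))
        = (x:ℂ)^(α-1) * ((y:ℂ)^(β-1) *
            (((Y * Real.sqrt (x ^ k - y ^ 2) / x : ℝ) : ℂ) ^ γ * H x)) := by
      intro y hy
      have hy0 : (0:ℝ) < y := hy
      have hz1 : (∫ z : ℝ in Ioi (0:ℝ),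
          ((φ ((x ^ k - y ^ 2) / (D * z ^ 2)) *
            ψ ((1/Y) * Real.sqrt ((x ^ 2 * z ^ 2) / (x ^ k - y ^ 2))) : ℝ) : ℂ) *
            (x : ℂ) ^ (α - 1) * (y : ℂ) ^ (β - 1) * (z : ℂ) ^ (γ - 1))
          = ((x:ℂ)^(α-1) * (y:ℂ)^(β-1)) * ∫ z : ℝ in Ioi (0:ℝ),
            ((φ ((x ^ k - y ^ 2) / (D * z ^ 2)) *
              ψ ((1/Y) * Real.sqrt ((x ^ 2 * z ^ 2) / (x ^ k - y ^ 2))) : ℝ) : ℂ) *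
              (z : ℂ) ^ (γ - 1) := by
        rw [← integral_const_mul]
        exact setIntegral_congr_fun measurableSet_Ioi (fun z hz => by ring)
      rw [hz1, step_z φ hφsupp (fun t => ψ t) D Y hD hY k γ hγ0 hx0 hy0]
      have hHx : H x = ∫ w in Ioi (0:ℝ),
          ((φ (x^2 / (D * Y^2 * w^2)) * ψ w : ℝ) : ℂ) * (w:ℂ)^(γ-1) := rfl
      rw [hHx]
      ring
    rw [setIntegral_congr_fun measurableSet_Ioi hinner, integral_const_mul]
    rw [step_y Y hY k β γ hβ hγ hx0 (H x)]
    have hxne : ((x:ℝ):ℂ) ≠ 0 := Complex.ofReal_ne_zero.mpr hx0.ne'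
    have hcomb : (x:ℂ)^(α-1) * (x:ℂ)^((k:ℂ)*(β+γ)/2 - γ) = (x:ℂ)^(s0 - γ - 1) := by
      rw [← Complex.cpow_add _ _ hxne]
      congr 1
      rw [hs0]; ring
    calc (x:ℂ)^(α-1) * ((Y:ℂ)^γ * (x:ℂ)^((k:ℂ)*(β+γ)/2 - γ) * 2⁻¹ * B * H x)
        = ((Y:ℂ)^γ * 2⁻¹ * B) * (((x:ℂ)^(α-1) * (x:ℂ)^((k:ℂ)*(β+γ)/2 - γ)) * H x) := by ring
      _ = ((Y:ℂ)^γ * 2⁻¹ * B) * ((x:ℂ)^(s0 - γ - 1) * H x) := by rw [hcomb]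
  rw [setIntegral_congr_fun measurableSet_Ioi hA, integral_const_mul]
  -- Step B : the outer integral via Fubini
  have hsγ : 0 < ((s0 - γ) + γ).re := by
    rw [show (s0 - γ) + γ = s0 by ring]; exact hs0re
  have hx2 : (∫ x in Ioi (0:ℝ), (x:ℂ)^(s0 - γ - 1) * H x)
      = (2⁻¹:ℂ) * ((Y * Real.sqrt D : ℝ):ℂ)^(s0 - γ) *
        (∫ u in Ioi (0:ℝ), ((φ u : ℝ):ℂ) * (u:ℂ)^((s0 - γ)/2 - 1)) *
        (∫ w in Ioi (0:ℝ), ((ψ w : ℝ):ℂ) * (w:ℂ)^((s0 - γ) + γ - 1)) :=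
    step_x φ hφc hφcont hφsupp ψ D Y hD hY (s0 - γ) γ hsγ
  rw [hx2]
  -- Step C : final algebra
  have h1 : (s0 - γ)/2 = s1 := by rw [hs0, hs1]; ring
  have h2 : (s0 - γ) + γ - 1 = s0 - 1 := by ring
  rw [h1, h2]
  have h3 : (∫ u in Ioi (0:ℝ), ((φ u : ℝ):ℂ) * (u:ℂ)^(s1 - 1)) = mellinT φ s1 := rfl
  have h4 : (∫ w in Ioi (0:ℝ), ((ψ w : ℝ):ℂ) * (w:ℂ)^(s0 - 1))
      = mellinT (fun x => ψ x) s0 := rfl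
  rw [h3, h4]
  have h5 : ((Y * Real.sqrt D : ℝ):ℂ)^(s0 - γ)
      = ((Y:ℝ):ℂ)^(s0 - γ) * ((D:ℝ):ℂ)^s1 := by
    rw [Complex.ofReal_mul, Complex.mul_cpow_ofReal_nonneg hY.le (Real.sqrt_nonneg D),
      sqrt_cpow hD.le, h1]
  rw [h5]
  have hYne : ((Y:ℝ):ℂ) ≠ 0 := Complex.ofReal_ne_zero.mpr hY.ne'
  have h6 : ((Y:ℝ):ℂ)^γ * ((Y:ℝ):ℂ)^(s0 - γ) = ((Y:ℝ):ℂ)^s0 := by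
    rw [← Complex.cpow_add _ _ hYne]; congr 1; ring
  calc (Y:ℂ)^γ * 2⁻¹ * B * (2⁻¹ * ((Y:ℂ)^(s0-γ) * (D:ℂ)^s1) * mellinT φ s1 *
          mellinT (fun x => ψ x) s0)
      = (D:ℂ)^s1 * ((Y:ℂ)^γ * (Y:ℂ)^(s0-γ)) * (1/4) * B * mellinT φ s1 *
          mellinT (fun x => ψ x) s0 := by ring
    _ = (D:ℂ)^s1 * (Y:ℂ)^s0 * (1/4) * B * mellinT φ s1 * mellinT (fun x => ψ x) s0 := by
        rw [h6]
end
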